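/- arXiv:1801.05308 — 9 statements merged into one kernel-verified Lean document; each statement's English description precedes it below -/
import Mathlib

section
/- Define B(n,λ,U,D) = Σ_{k=0}^{n} C(n,k) (∏_{j=0}^{k-1} (D - U + jλI)) U^{n-k}, with products ordered left to right in increasing j. If [D,U] = λU, then B(n,λ,U,D) = ∏_{j=0}^{n-1} (D + jλI); in particular B(n,λ,U,D) does not depend on U. -/
/-- The binomial-type combination `B(n, λ, U, D)`, with the products ordered
left to right in increasing `j`. -/
noncomputable def binomB {K A : Type*} [Field K] [Ring A] [Algebra K A]
    (n : ℕ) (l : K) (U D : A) : A :=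
  ∑ k ∈ Finset.range (n + 1),
    n.choose k •
      (((List.range k).map (fun j : ℕ => D - U + ((j : K) * l) • (1 : A))).prod * U ^ (n - k))

lemma binomB_aux1 {K A : Type*} [Field K] [Ring A] [Algebra K A]
    (l : K) (U D : A) (h : D * U - U * D = l • U) (c : K) :
    (D + c • (1 : A)) * U = U * (D + (c + l) • (1 : A)) := by
  have hDU : D * U = l • U + U * D := sub_eq_iff_eq_add.mp h
  rw [add_mul, smul_mul_assoc, one_mul, mul_add, mul_smul_comm, mul_one, hDU, add_smul]
  abel

lemma binomB_aux2 {K A : Type*} [Field K] [Ring A] [Algebra K A]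
    (l : K) (U D : A) (h : D * U - U * D = l • U) (c : K) (p : ℕ) :
    (D + c • (1 : A)) * U ^ p = U ^ p * (D + (c + (p : K) * l) • (1 : A)) := by
  induction p with
  | zero => simp
  | succ p ih =>
    have hc : c + (p : K) * l + l = c + ((p + 1 : ℕ) : K) * l := by push_cast; ring
    rw [pow_succ, ← mul_assoc, ih, mul_assoc, binomB_aux1 l U D h, ← mul_assoc, ← pow_succ, hc]

theorem binomB_eq_of_commutator
    {K A : Type*} [Field K] [CharZero K] [Ring A] [Algebra K A]
    (l : K) (U D : A) (h : D * U - U * D = l • U) (n : ℕ) :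
    binomB n l U D =
      ((List.range n).map (fun j : ℕ => D + ((j : K) * l) • (1 : A))).prod := by
  induction n with
  | zero => simp [binomB]
  | succ n ih =>
    set P : ℕ → A := fun k =>
      ((List.range k).map (fun j : ℕ => D - U + ((j : K) * l) • (1 : A))).prod with hP
    have hPsucc : ∀ k, P (k + 1) = P k * (D - U + ((k : K) * l) • (1 : A)) := by
      intro k
      simp [hP, List.range_succ]
    set t : ℕ → A := fun k => P k * U ^ (n + 1 - k) with ht
    have step1 : binomB (n + 1) l U D
        = ∑ k ∈ Finset.range (n + 1), n.choose k • (t (k + 1) + t k) := by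
      rw [binomB]
      rw [Finset.sum_range_succ' (fun k => (n + 1).choose k • (t k))]
      have e1 : ∀ k, (n + 1).choose (k + 1) • t (k + 1)
          = n.choose k • t (k + 1) + n.choose (k + 1) • t (k + 1) := by
        intro k
        rw [Nat.choose_succ_succ, add_smul]
      simp only [e1, Finset.sum_add_distrib, Nat.choose_zero_right, one_smul]
      have e2 : (∑ k ∈ Finset.range (n + 1), n.choose (k + 1) • t (k + 1)) + t 0
          = ∑ k ∈ Finset.range (n + 1), n.choose k • t k := by
        have := Finset.sum_range_succ' (fun k => n.choose k • (t k)) (n + 1)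
        rw [Finset.sum_range_succ (fun k => n.choose k • (t k)) (n + 1)] at this
        simpa using this.symm
      rw [add_assoc, e2, ← Finset.sum_add_distrib]
      simp [smul_add]
    have step2 : ∀ k ∈ Finset.range (n + 1),
        n.choose k • (t (k + 1) + t k)
          = n.choose k • (P k * U ^ (n - k) * (D + ((n : K) * l) • (1 : A))) := by
      intro k hk
      rw [Finset.mem_range, Nat.lt_succ_iff] at hk
      congr 1
      have h1 : n + 1 - (k + 1) = n - k := by omega
      have h2 : n + 1 - k = (n - k) + 1 := by omega
      rw [ht]
      simp only [h1, h2, hPsucc]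
      rw [pow_succ', mul_assoc, ← mul_add, ← add_mul]
      have h3 : D - U + ((k : K) * l) • (1 : A) + U = D + ((k : K) * l) • (1 : A) := by abel
      rw [h3, binomB_aux2 l U D h, ← mul_assoc]
      congr 2
      rw [Nat.cast_sub hk]
      ring_nf
    rw [step1, Finset.sum_congr rfl step2, List.range_succ]
    simp only [List.map_append, List.prod_append, List.map_cons, List.map_nil,
      List.prod_cons, List.prod_nil, mul_one]
    rw [← ih, binomB, Finset.sum_mul]
    refine Finset.sum_congr rfl fun k hk => ?_
    rw [smul_mul_assoc]
end

section
/- Suppose [D,U] = λU and B(n,λ,U,D) = Σ_{k=0}^{n} C(n,k) (∏_{j=0}^{k-1}(D - U + jλI)) U^{n-k} (products ordered left to right in increasing j). If V ∈ A satisfies (D + jλI)V = 0 for some j with 0 ≤ j ≤ n-1, then B(n,λ,U,D) · V = 0. -/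
open Finset

theorem List.prod_mul_eq_zero_of_commute {M : Type*} [MonoidWithZero M] {l : List M} {a v : M}
    (ha : a ∈ l) (hcomm : ∀ b ∈ l, Commute a b) (hv : a * v = 0) : l.prod * v = 0 := by
  induction l with
  | nil => simp at ha
  | cons b t ih =>
    rw [List.prod_cons, mul_assoc]
    obtain rfl | ha := List.mem_cons.mp ha
    · rw [← mul_assoc, (Commute.list_prod_right t a fun x hx => hcomm x (by simp [hx])).eq,
        mul_assoc, hv, mul_zero]
    · rw [ih ha (fun x hx => hcomm x (by simp [hx])), mul_zero]

section

variable {R A : Type*} [CommSemiring R] [Semiring A] [Algebra R A]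

def shiftedAscFactorial (X : A) (l : R) (k : ℕ) : A :=
  ((List.range k).map fun j : ℕ => X + ((j : R) * l) • (1 : A)).prod

@[simp]
theorem shiftedAscFactorial_zero (X : A) (l : R) : shiftedAscFactorial X l 0 = 1 := rfl

theorem shiftedAscFactorial_succ (X : A) (l : R) (k : ℕ) :
    shiftedAscFactorial X l (k + 1) = shiftedAscFactorial X l k * (X + ((k : R) * l) • 1) := by
  simp [shiftedAscFactorial, List.range_succ]

theorem commute_add_smul_one (X : A) (a b : R) : Commute (X + a • 1) (X + b • 1) := by
  have hX : ∀ c : R, Commute X (c • 1) := fun c => (Commute.one_right X).smul_right c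
  have h1 : ∀ c d : R, Commute (c • (1 : A)) (d • 1) := fun c d =>
    ((Commute.one_right _).smul_right d).smul_left c
  exact ((Commute.refl X).add_right (hX b)).add_left ((hX a).symm.add_right (h1 a b))

end

section

variable {R A : Type*} [CommRing R] [Ring A] [Algebra R A] {X U : A} {l : R}

theorem add_smul_one_mul_of_commutator (h : X * U - U * X = l • U) (c : R) :
    (X + c • 1) * U = U * (X + (c + l) • 1) := by
  rw [add_mul, mul_add, smul_mul_assoc, mul_smul_comm, one_mul, mul_one, add_smul,
    sub_eq_iff_eq_add.mp h]
  abel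

theorem add_smul_one_mul_pow_of_commutator (h : X * U - U * X = l • U) (c : R) (m : ℕ) :
    (X + c • 1) * U ^ m = U ^ m * (X + (c + m * l) • 1) := by
  induction m generalizing c with
  | zero => simp
  | succ m ih =>
    rw [pow_succ, ← mul_assoc, ih, mul_assoc, add_smul_one_mul_of_commutator h, ← mul_assoc]
    push_cast
    ring_nf

theorem shiftedAscFactorial_add_of_commutator (h : X * U - U * X = l • U) (n : ℕ) :
    shiftedAscFactorial (X + U) l n =
      ∑ ij ∈ antidiagonal n, n.choose ij.1 • (shiftedAscFactorial X l ij.1 * U ^ ij.2) := by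
  induction n with
  | zero => simp
  | succ n ih =>
    rw [sum_antidiagonal_choose_succ_nsmul (fun i j => shiftedAscFactorial X l i * U ^ j),
      shiftedAscFactorial_succ, ih, sum_mul, add_comm (Finset.sum _ _), ← sum_add_distrib]
    refine sum_congr rfl fun ⟨i, j⟩ hij => ?_
    rw [HasAntidiagonal.mem_antidiagonal] at hij
    have hmove : U ^ j * (X + ((n : R) * l) • 1) = (X + ((i : R) * l) • 1) * U ^ j := by
      rw [add_smul_one_mul_pow_of_commutator h, ← hij]
      push_cast
      ring_nf
    rw [Nat.choose_symm_of_eq_add hij.symm, smul_mul_assoc, ← smul_add, add_right_comm X U,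
      mul_add, mul_assoc, hmove, ← mul_assoc, ← shiftedAscFactorial_succ, mul_assoc, ← pow_succ,
      add_comm]

end

theorem shiftedAscFactorial_mul_eq_zero {R A : Type*} [CommSemiring R] [Semiring A] [Algebra R A]
    {X V : A} {l : R} {n j : ℕ} (hj : j < n) (hV : (X + ((j : R) * l) • 1) * V = 0) :
    shiftedAscFactorial X l n * V = 0 := by
  refine List.prod_mul_eq_zero_of_commute (List.mem_map_of_mem (List.mem_range.mpr hj)) ?_ hV
  simpa only [List.forall_mem_map] using fun i _ => commute_add_smul_one X _ _

theorem binomB_eq_shiftedAscFactorial {K A : Type*} [Field K] [Ring A] [Algebra K A] {l : K}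
    {U D : A} (h : D * U - U * D = l • U) (n : ℕ) : binomB n l U D = shiftedAscFactorial D l n := by
  have h' : (D - U) * U - U * (D - U) = l • U := by rw [← h]; noncomm_ring
  conv_rhs => rw [← sub_add_cancel D U]
  rw [shiftedAscFactorial_add_of_commutator h', Nat.sum_antidiagonal_eq_sum_range_succ_mk]
  rfl

theorem binomB_mul_eq_zero_general
    {K A : Type*} [Field K] [Ring A] [Algebra K A]
    (l : K) (U D V : A) (h : D * U - U * D = l • U)
    (n j : ℕ) (hn : 1 ≤ n) (hj : j ≤ n - 1)
    (hV : (D + ((j : K) * l) • (1 : A)) * V = 0) :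
    binomB n l U D * V = 0 := by
  rw [binomB_eq_shiftedAscFactorial h]
  exact shiftedAscFactorial_mul_eq_zero (by omega) hV

theorem binomB_mul_eq_zero
    {K A : Type*} [Field K] [CharZero K] [Ring A] [Algebra K A]
    (l : K) (U D V : A) (h : D * U - U * D = l • U)
    (n j : ℕ) (hn : 1 ≤ n) (hj : j ≤ n - 1)
    (hV : (D + ((j : K) * l) • (1 : A)) * V = 0) :
    binomB n l U D * V = 0 :=
  binomB_mul_eq_zero_general l U D V h n j hn hj hV
end

section
/- Suppose V, W, D ∈ A with [V,W] = 0 and [D,W] = λW. Then B(n,λ,V+W,D) = B(n,λ,V,D), where B(n,λ,U,D) = Σ_{k=0}^{n} C(n,k) (∏_{j=0}^{k-1}(D - U + jλI)) U^{n-k} with products ordered left to right in increasing j. -/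
open Finset

theorem Nat.add_add_choose_mul_add_choose (k p r : ℕ) :
    (k + p + r).choose k * (p + r).choose p = (k + p + r).choose (k + p) * (k + p).choose k := by
  rw [Nat.choose_mul (Nat.le_add_right k p)]
  congr 2 <;> omega

theorem Commute.sum_antidiagonal_choose_smul_mul_add_pow {A : Type*} [Semiring A] {V W : A}
    (h : Commute W V) (a : ℕ → A) (n : ℕ) :
    ∑ p ∈ antidiagonal n, n.choose p.1 • (a p.1 * (W + V) ^ p.2) =
      ∑ p ∈ antidiagonal n,
        n.choose p.1 • ((∑ q ∈ antidiagonal p.1, p.1.choose q.1 • (a q.1 * W ^ q.2)) * V ^ p.2) := by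
  simp only [h.add_pow', mul_sum, sum_mul, smul_sum, mul_smul_comm, smul_mul_assoc, smul_smul,
    ← mul_assoc, sum_sigma']
  apply sum_nbij' (fun x ↦ ⟨(x.1.1 + x.2.1, x.2.2), (x.1.1, x.2.1)⟩)
    (fun x ↦ ⟨(x.2.1, x.2.2 + x.1.2), (x.2.2, x.1.2)⟩)
  all_goals rintro ⟨⟨k, m⟩, ⟨p, r⟩⟩ hp
  all_goals simp only [mem_sigma, HasAntidiagonal.mem_antidiagonal, and_true] at hp ⊢
  all_goals obtain ⟨rfl, rfl⟩ := hp
  · exact add_assoc k p r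
  · exact (add_assoc p r m).symm
  · rfl
  · rfl
  · rw [← add_assoc, Nat.add_add_choose_mul_add_choose]

section
variable {K A : Type*} [CommSemiring K] [Ring A] [Algebra K A]

def risingProd (l : K) (X : A) (k : ℕ) : A :=
  ((List.range k).map fun j : ℕ => X + ((j : K) * l) • (1 : A)).prod

@[simp]
theorem risingProd_zero (l : K) (X : A) : risingProd l X 0 = 1 := rfl

theorem risingProd_succ (l : K) (X : A) (k : ℕ) :
    risingProd l X (k + 1) = risingProd l X k * (X + ((k : K) * l) • (1 : A)) := by
  simp [risingProd, List.range_succ]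

theorem mul_add_smul_one_of_mul_sub_mul {l : K} {E W : A} (h : E * W - W * E = l • W) (x : K) :
    W * (E + (x + l) • (1 : A)) = (E + x • (1 : A)) * W := by
  rw [sub_eq_iff_eq_add] at h
  simp only [mul_add, add_mul, add_smul, mul_smul_comm, smul_mul_assoc, mul_one, one_mul, h]
  abel

theorem pow_mul_add_smul_one_of_mul_sub_mul {l : K} {E W : A} (h : E * W - W * E = l • W)
    (x : K) (m : ℕ) : W ^ m * (E + (x + m * l) • (1 : A)) = (E + x • (1 : A)) * W ^ m := by
  induction m generalizing x with
  | zero => simp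
  | succ m ih =>
    calc W ^ (m + 1) * (E + (x + (m + 1 : ℕ) * l) • (1 : A))
        = W * (W ^ m * (E + ((x + l) + m * l) • (1 : A))) := by
          rw [pow_succ', mul_assoc]; congr 4; push_cast; ring
      _ = (E + x • (1 : A)) * W ^ (m + 1) := by
          rw [ih, ← mul_assoc, mul_add_smul_one_of_mul_sub_mul h, mul_assoc, ← pow_succ']
end

section
variable {K A : Type*} [Field K] [Ring A] [Algebra K A]

theorem binomB_eq_sum_antidiagonal (n : ℕ) (l : K) (U D : A) :
    binomB n l U D = ∑ p ∈ antidiagonal n, n.choose p.1 • (risingProd l (D - U) p.1 * U ^ p.2) :=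
  (Nat.sum_antidiagonal_eq_sum_range_succ
    (fun k m ↦ n.choose k • (risingProd l (D - U) k * U ^ m)) n).symm

theorem binomB_eq_risingProd {l : K} {U D : A} (h : D * U - U * D = l • U) (n : ℕ) :
    binomB n l U D = risingProd l D n := by
  rw [binomB_eq_sum_antidiagonal]
  induction n with
  | zero => simp
  | succ n ih =>
    rw [sum_antidiagonal_choose_succ_nsmul (fun k m ↦ risingProd l (D - U) k * U ^ m),
      risingProd_succ, ← ih, sum_mul, ← sum_add_distrib]
    refine sum_congr rfl fun ⟨k, m⟩ hp ↦ ?_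
    rw [HasAntidiagonal.mem_antidiagonal] at hp
    rw [← Nat.choose_symm_of_eq_add hp.symm, ← smul_add, smul_mul_assoc]
    congr 1
    calc risingProd l (D - U) k * U ^ (m + 1) + risingProd l (D - U) (k + 1) * U ^ m
        = risingProd l (D - U) k * (D + ((k : K) * l) • (1 : A)) * U ^ m := by
          rw [risingProd_succ, pow_succ', ← mul_assoc, ← add_mul, ← mul_add, ← add_assoc,
            add_sub_cancel]
      _ = risingProd l (D - U) k * U ^ m * (D + ((n : K) * l) • (1 : A)) := by
          rw [mul_assoc, mul_assoc, ← hp, ← pow_mul_add_smul_one_of_mul_sub_mul h]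
          congr 4; push_cast; ring
end

theorem binomB_add_right_invariant_general
    {K A : Type*} [Field K] [Ring A] [Algebra K A]
    (l : K) (V W D : A) (hVW : V * W - W * V = 0)
    (hDW : D * W - W * D = l • W) (n : ℕ) :
    binomB n l (V + W) D = binomB n l V D := by
  have hWV : Commute W V := (sub_eq_zero.mp hVW).symm
  have hE : (D - V) * W - W * (D - V) = l • W :=
    calc (D - V) * W - W * (D - V) = (D * W - W * D) - (V * W - W * V) := by noncomm_ring
      _ = l • W := by rw [hDW, hVW, sub_zero]
  calc binomB n l (V + W) D
      = ∑ p ∈ antidiagonal n, n.choose p.1 • (risingProd l (D - V - W) p.1 * (W + V) ^ p.2) := by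
        rw [binomB_eq_sum_antidiagonal, sub_add_eq_sub_sub, add_comm]
    _ = ∑ p ∈ antidiagonal n, n.choose p.1 • (binomB p.1 l W (D - V) * V ^ p.2) := by
        simp only [hWV.sum_antidiagonal_choose_smul_mul_add_pow, binomB_eq_sum_antidiagonal]
    _ = binomB n l V D := by
        simp only [binomB_eq_risingProd hE, binomB_eq_sum_antidiagonal]

theorem binomB_add_right_invariant
    {K A : Type*} [Field K] [CharZero K] [Ring A] [Algebra K A]
    (l : K) (V W D : A) (hVW : V * W - W * V = 0)
    (hDW : D * W - W * D = l • W) (n : ℕ) :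
    binomB n l (V + W) D = binomB n l V D :=
  binomB_add_right_invariant_general l V W D hVW hDW n
end

section
/- Suppose [D,U] = -λU. Then for all n > 1, B(n,λ,U,D) = B(n-1,λ,U,D)(D + λ(n-1)I) - 2(n-1)λ U B(n-2,λ,U,D) + 2(n-1)(n-2)λ² U B(n-3,λ,U,D), where the last term is absent (zero) when n = 2, and B(n,λ,U,D) = Σ_{k=0}^{n} C(n,k) (∏_{j=0}^{k-1}(D - U + jλI)) U^{n-k} with products ordered left to right in increasing j. -/
namespace BinomBAux

variable {K A : Type*} [Field K] [Ring A] [Algebra K A]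

/-- `X + c·1` where `X = D - U`. -/
noncomputable def facK (U D : A) (c : K) : A := D - U + c • (1 : A)

noncomputable def Pk (l : K) (U D : A) (k : ℕ) : A :=
  ((List.range k).map (fun j : ℕ => facK U D ((j : K) * l))).prod

noncomputable def Qk (l : K) (U D : A) (k : ℕ) : A :=
  ((List.range k).map (fun j : ℕ => facK U D (((j + 1 : ℕ) : K) * l))).prod

lemma commute_one_smul (x : A) (c : K) : Commute x (c • (1 : A)) :=
  (Commute.one_right x).smul_right c

lemma commute_facK (U D : A) (a b : K) : Commute (facK U D a) (facK U D b) := by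
  unfold facK
  exact Commute.add_left ((Commute.refl _).add_right (commute_one_smul _ b))
    ((commute_one_smul _ a).symm.add_right (commute_one_smul _ b))

lemma commute_facK_Qk (l : K) (U D : A) (c : K) (k : ℕ) :
    Commute (facK U D c) (Qk l U D k) := by
  apply Commute.list_prod_right
  intro x hx
  simp only [List.mem_map] at hx
  obtain ⟨j, -, rfl⟩ := hx
  exact commute_facK U D c _

lemma facK_add (U D : A) (a b : K) :
    facK U D (a + b) = facK U D a + b • (1 : A) := by
  simp [facK, add_smul, add_assoc]

variable {l : K} {U D : A} (h : D * U - U * D = -(l • U))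

include h in
lemma U_facK (c : K) : U * facK U D c = facK U D (c + l) * U := by
  have h1 : U * D - D * U = l • U := by rw [← neg_sub, h, neg_neg]
  have h2 : U * (D - U) = (D - U) * U + l • U := by
    have : U * (D - U) - (D - U) * U = U * D - D * U := by noncomm_ring
    rw [← h1, ← this]; abel
  simp only [facK, mul_add, add_mul, h2, mul_smul_comm, smul_mul_assoc, one_mul, mul_one]
  module

include h in
lemma Upow_facK (m : ℕ) (c : K) :
    U ^ m * facK U D c = facK U D (c + (m : K) * l) * U ^ m := by
  induction m generalizing c with
  | zero => simp
  | succ m ih =>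
    have : U ^ (m + 1) * facK U D c = U ^ m * (U * facK U D c) := by
      rw [pow_succ, mul_assoc]
    rw [this, U_facK h, ← mul_assoc, ih, mul_assoc, ← pow_succ]
    push_cast
    ring_nf

lemma Pk_succ (k : ℕ) :
    Pk l U D (k + 1) = Pk l U D k * facK U D ((k : K) * l) := by
  simp [Pk, List.range_succ]

lemma Qk_succ (k : ℕ) :
    Qk l U D (k + 1) = Qk l U D k * facK U D (((k + 1 : ℕ) : K) * l) := by
  simp [Qk, List.range_succ]

lemma Pk_succ' (k : ℕ) :
    Pk l U D (k + 1) = (D - U) * Qk l U D k := by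
  have h0 : facK U D ((0 : ℕ) * l : K) = D - U := by simp [facK]
  rw [Pk, List.range_succ_eq_map, List.map_cons, List.prod_cons, List.map_map, h0, Qk]
  rfl

include h in
lemma U_Pk (k : ℕ) : U * Pk l U D k = Qk l U D k * U := by
  induction k with
  | zero => simp [Pk, Qk]
  | succ k ih =>
    rw [Pk_succ, Qk_succ, ← mul_assoc, ih, mul_assoc, U_facK h, ← mul_assoc]
    push_cast
    ring_nf

lemma Qk_eq (k : ℕ) :
    Qk l U D (k + 1) = Pk l U D (k + 1) + (((k + 1 : ℕ) : K) * l) • Qk l U D k := by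
  rw [Qk_succ, ← (commute_facK_Qk l U D _ k).eq, Pk_succ']
  simp only [facK, add_mul, smul_mul_assoc, one_mul]

lemma binomB_eq (n : ℕ) :
    binomB n l U D =
      ∑ k ∈ Finset.range (n + 1),
        ((n.choose k : K)) • (Pk l U D k * U ^ (n - k)) := by
  unfold binomB Pk facK
  refine Finset.sum_congr rfl fun k _ => ?_
  rw [Nat.cast_smul_eq_nsmul]


include h in
lemma lemI (m : ℕ) :
    binomB (m + 1) l U D =
      binomB m l U D * (D + ((m : K) * l) • (1 : A))
        - (2 * l) • ∑ k ∈ Finset.range (m + 1),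
            ((((m - k) * m.choose k : ℕ)) : K) • (Pk l U D k * U ^ (m - k)) := by
  have hD : D + ((m : K) * l) • (1 : A) = facK U D ((m : K) * l) + U := by
    unfold facK; abel
  have e1 : binomB m l U D * facK U D ((m : K) * l)
      = (∑ k ∈ Finset.range (m + 1), ((m.choose k : K)) • (Pk l U D (k + 1) * U ^ (m - k)))
        + ∑ k ∈ Finset.range (m + 1),
            (2 * l * ((((m - k) * m.choose k : ℕ)) : K)) • (Pk l U D k * U ^ (m - k)) := by
    rw [binomB_eq, Finset.sum_mul, ← Finset.sum_add_distrib]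
    refine Finset.sum_congr rfl fun k hk => ?_
    have hkm : k ≤ m := Nat.lt_succ_iff.mp (Finset.mem_range.mp hk)
    have hsplit : facK U D ((m : K) * l + ((m - k : ℕ) : K) * l)
        = facK U D ((k : K) * l) + ((2 * (((m - k : ℕ)) : K)) * l) • (1 : A) := by
      rw [← facK_add]
      congr 1
      rw [Nat.cast_sub hkm]
      ring
    rw [smul_mul_assoc, mul_assoc, Upow_facK h, ← mul_assoc, hsplit, mul_add, ← Pk_succ]
    simp only [mul_smul_comm, mul_one, smul_mul_assoc, add_mul, smul_add, smul_smul]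
    match_scalars <;> (push_cast [Nat.cast_sub hkm]; ring)
  have e2 : binomB m l U D * U
      = ∑ k ∈ Finset.range (m + 1), ((m.choose k : K)) • (Pk l U D k * U ^ (m + 1 - k)) := by
    rw [binomB_eq, Finset.sum_mul]
    refine Finset.sum_congr rfl fun k hk => ?_
    have hkm : k ≤ m := Nat.lt_succ_iff.mp (Finset.mem_range.mp hk)
    rw [smul_mul_assoc, mul_assoc, ← pow_succ, Nat.sub_add_comm hkm]
  have e4 : ∑ k ∈ Finset.range (m + 1), ((m.choose k : K)) • (Pk l U D k * U ^ (m + 1 - k))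
      = (∑ i ∈ Finset.range (m + 1),
            ((m.choose (i + 1) : K)) • (Pk l U D (i + 1) * U ^ (m + 1 - (i + 1))))
        + ((m.choose 0 : K)) • (Pk l U D 0 * U ^ (m + 1 - 0)) := by
    have h0 : ∑ k ∈ Finset.range (m + 1), ((m.choose k : K)) • (Pk l U D k * U ^ (m + 1 - k))
        = ∑ k ∈ Finset.range (m + 2), ((m.choose k : K)) • (Pk l U D k * U ^ (m + 1 - k)) := by
      rw [Finset.sum_range_succ
        (fun k => ((m.choose k : K)) • (Pk l U D k * U ^ (m + 1 - k))) (m + 1)]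
      simp
    rw [h0, Finset.sum_range_succ'
      (fun k => ((m.choose k : K)) • (Pk l U D k * U ^ (m + 1 - k))) (m + 1)]
  have e3 : binomB (m + 1) l U D
      = (∑ k ∈ Finset.range (m + 1), ((m.choose k : K)) • (Pk l U D (k + 1) * U ^ (m - k)))
        + binomB m l U D * U := by
    rw [binomB_eq (m + 1), Finset.sum_range_succ', e2, e4]
    simp only [Nat.choose_succ_succ, Nat.cast_add, add_smul, Finset.sum_add_distrib,
      Nat.succ_sub_succ_eq_sub, Nat.choose_zero_right, Nat.cast_one]
    abel
  have e5 : (2 * l) • (∑ k ∈ Finset.range (m + 1),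
        ((((m - k) * m.choose k : ℕ)) : K) • (Pk l U D k * U ^ (m - k)))
      = ∑ k ∈ Finset.range (m + 1),
          (2 * l * ((((m - k) * m.choose k : ℕ)) : K)) • (Pk l U D k * U ^ (m - k)) := by
    rw [Finset.smul_sum]
    simp [smul_smul]
  rw [hD, mul_add, e1, e3, e5]
  abel

include h in
lemma lemIIa (n : ℕ) : U * binomB n l U D
    = ∑ k ∈ Finset.range (n + 1), ((n.choose k : K)) • (Qk l U D k * U ^ (n + 1 - k)) := by
  rw [binomB_eq, Finset.mul_sum]
  refine Finset.sum_congr rfl fun k hk => ?_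
  have hkm : k ≤ n := Nat.lt_succ_iff.mp (Finset.mem_range.mp hk)
  rw [mul_smul_comm, ← mul_assoc, U_Pk h, mul_assoc, ← pow_succ', Nat.sub_add_comm hkm]

include h in
lemma lemIIb (m : ℕ) : U * binomB (m + 1) l U D
    = (∑ k ∈ Finset.range (m + 2), (((m + 1).choose k : K)) • (Pk l U D k * U ^ (m + 2 - k)))
      + (((m : K) + 1) * l) • (U * binomB m l U D) := by
  rw [lemIIa h (m + 1), Finset.sum_range_succ' _ (m + 1)]
  have hK : ∀ i : ℕ, (((m + 1).choose (i + 1) : ℕ) : K) * ((i : K) + 1)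
      = ((m : K) + 1) * ((m.choose i : ℕ) : K) := by
    intro i
    have h4 : ((m + 1) * m.choose i : ℕ) = ((m + 1).choose (i + 1) * (i + 1) : ℕ) := by
      simpa [Nat.succ_eq_add_one] using Nat.add_one_mul_choose_eq m i
    have h5 := congrArg (fun x : ℕ => (x : K)) h4
    push_cast at h5
    linear_combination -h5
  have expand : ∀ i ∈ Finset.range (m + 1),
      (((m + 1).choose (i + 1) : K)) • (Qk l U D (i + 1) * U ^ (m + 1 + 1 - (i + 1)))
        = (((m + 1).choose (i + 1) : K)) • (Pk l U D (i + 1) * U ^ (m + 2 - (i + 1)))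
          + (((m : K) + 1) * l) • (((m.choose i : K)) • (Qk l U D i * U ^ (m + 1 - i))) := by
    intro i _
    have hexp : m + 1 + 1 - (i + 1) = m + 1 - i := by omega
    rw [hexp, Qk_eq, add_mul, smul_mul_assoc]
    match_scalars
    · ring
    · linear_combination l * hK i
  rw [Finset.sum_congr rfl expand, Finset.sum_add_distrib, ← Finset.smul_sum, ← lemIIa h m]
  have last : ∑ i ∈ Finset.range (m + 1),
        (((m + 1).choose (i + 1) : K)) • (Pk l U D (i + 1) * U ^ (m + 2 - (i + 1)))
        + (((m + 1).choose 0 : K)) • (Qk l U D 0 * U ^ (m + 1 + 1 - 0))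
      = ∑ k ∈ Finset.range (m + 2), (((m + 1).choose k : K)) • (Pk l U D k * U ^ (m + 2 - k)) := by
    rw [Finset.sum_range_succ'
      (fun k => (((m + 1).choose k : K)) • (Pk l U D k * U ^ (m + 2 - k))) (m + 1)]
    norm_num [Qk, Pk]
  rw [add_right_comm, last]

include h in
lemma lemII (m : ℕ) :
    ∑ k ∈ Finset.range (m + 2 + 1),
        ((((m + 2 - k) * (m + 2).choose k : ℕ)) : K) • (Pk l U D k * U ^ (m + 2 - k))
      = ((m : K) + 2) • (U * binomB (m + 1) l U D)
        - (((m : K) + 2) * (((m : K) + 1) * l)) • (U * binomB m l U D) := by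
  have hco : ∀ k, (m + 2 - k) * (m + 2).choose k = (m + 2) * (m + 1).choose k := by
    intro k
    rw [mul_comm, ← Nat.choose_succ_right_eq]
    exact (Nat.add_one_mul_choose_eq (m + 1) k).symm
  have step1 : ∑ k ∈ Finset.range (m + 2 + 1),
        ((((m + 2 - k) * (m + 2).choose k : ℕ)) : K) • (Pk l U D k * U ^ (m + 2 - k))
      = ((m : K) + 2) •
          ∑ k ∈ Finset.range (m + 2), (((m + 1).choose k : K)) • (Pk l U D k * U ^ (m + 2 - k)) := by
    rw [Finset.sum_range_succ, Finset.smul_sum]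
    simp only [Nat.sub_self, Nat.zero_mul, Nat.cast_zero, zero_smul, add_zero]
    refine Finset.sum_congr rfl fun k hk => ?_
    rw [hco k, smul_smul]
    match_scalars
    push_cast
    ring
  have hs : ∑ k ∈ Finset.range (m + 2), (((m + 1).choose k : K)) • (Pk l U D k * U ^ (m + 2 - k))
      = U * binomB (m + 1) l U D - (((m : K) + 1) * l) • (U * binomB m l U D) := by
    rw [lemIIb h m]
    abel
  rw [step1, hs, smul_sub, smul_smul]

end BinomBAux

theorem binomB_recurrence_wrong_sign
    {K A : Type*} [Field K] [CharZero K] [Ring A] [Algebra K A]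
    (l : K) (U D : A) (h : D * U - U * D = -(l • U)) (n : ℕ) (hn : 1 < n) :
    binomB n l U D =
      binomB (n - 1) l U D * (D + (((n : K) - 1) * l) • (1 : A))
        - (2 * ((n : K) - 1) * l) • (U * binomB (n - 2) l U D)
        + (2 * ((n : K) - 1) * ((n : K) - 2) * l ^ 2) • (U * binomB (n - 3) l U D) := by
  rcases n with _ | _ | _ | m
  · omega
  · omega
  case succ.succ.succ =>
    rw [show m + 3 - 1 = m + 2 by omega, show m + 3 - 2 = m + 1 by omega,
      show m + 3 - 3 = m by omega]
    have h1 := BinomBAux.lemI h (m + 2)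
    have h2 := BinomBAux.lemII h m
    rw [show ((m + 2 : ℕ) : K) * l = (((m + 3 : ℕ) : K) - 1) * l by push_cast; ring] at h1
    rw [h1, h2]
    match_scalars <;> (push_cast; ring)
  case succ.succ.zero =>
    have h1 := BinomBAux.lemI h 1
    have hsum : ∑ k ∈ Finset.range (1 + 1),
        ((((1 - k) * Nat.choose 1 k : ℕ)) : K) • (BinomBAux.Pk l U D k * U ^ (1 - k))
        = U * binomB 0 l U D := by
      rw [Finset.sum_range_succ, Finset.sum_range_succ, Finset.sum_range_zero]
      simp [BinomBAux.Pk, binomB]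
    rw [hsum] at h1
    rw [show (0 + 1 + 1 : ℕ) = 1 + 1 from rfl]
    rw [show ((1 + 1 : ℕ) : K) - 1 = ((1 : ℕ) : K) by push_cast; ring]
    rw [h1]
    match_scalars <;> (push_cast; ring)
end

section
/- Let D, U be linear operators on a vector space F over a field of characteristic zero with [D,U] = -λU, and let F₀ = ker D. Then for every odd n, B(n,λ,U,D) vanishes on F₀, where B(n,λ,U,D) = Σ_{k=0}^{n} C(n,k) (∏_{j=0}^{k-1}(D - U + jλI)) U^{n-k} (products ordered left to right in increasing j). -/
/-- Rising factorial on the integers. -/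
def afZ : ℤ → ℕ → ℤ
  | _, 0 => 1
  | x, (s+1) => x * afZ (x+1) s

lemma afZ_succ_left (x : ℤ) (s : ℕ) : afZ x (s+1) = x * afZ (x+1) s := rfl

lemma afZ_succ_right (x : ℤ) (s : ℕ) : afZ x (s+1) = afZ x s * (x + s) := by
  induction s generalizing x with
  | zero => simp [afZ]
  | succ s ih =>
    rw [afZ_succ_left, ih, afZ_succ_left]
    push_cast
    ring

lemma afZ_neg_nat (a : ℕ) : ∀ s : ℕ, afZ (-(a:ℤ)) s = (-1)^s * (s.factorial) * (a.choose s) := by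
  intro s
  induction s with
  | zero => simp [afZ]
  | succ s ih =>
    rw [afZ_succ_right, ih]
    rcases le_or_gt (s+1) a with hle | hlt
    · have h := Nat.choose_succ_right_eq a s
      have hc : ((a - s : ℕ) : ℤ) = (a:ℤ) - s := by
        have hs : s ≤ a := by omega
        push_cast [hs]; ring
      have h' : (a.choose (s+1) : ℤ) * (s+1) = (a.choose s) * ((a:ℤ) - s) := by
        rw [← hc]; exact_mod_cast congrArg (Nat.cast (R := ℤ)) h
      have hfac : ((s+1).factorial : ℤ) = (s.factorial : ℤ) * (s+1) := by
        rw [Nat.factorial_succ]; push_cast; ring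
      rw [hfac]
      linear_combination ((-1:ℤ)^s * (s.factorial : ℤ)) * h'
    · have h1 : a.choose (s+1) = 0 := Nat.choose_eq_zero_of_lt hlt
      rcases le_or_gt s a with hsa | hsa
      · have hsa' : s = a := by omega
        subst hsa'
        rw [h1]
        simp
      · have h2 : a.choose s = 0 := Nat.choose_eq_zero_of_lt hsa
        rw [h1, h2]
        ring

/-- The key Pascal-type recursion for the binomial-times-rising-factorial coefficients. -/
lemma keyZ (k t : ℕ) (x : ℤ) :
    (((k+1).choose (t+1) : ℕ) : ℤ) * afZ x (t+1)
      = (k.choose t) * afZ (x+1) t * (x - k + t) + (k.choose (t+1)) * afZ (x+1) (t+1) := by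
  rw [afZ_succ_left, afZ_succ_right, Nat.choose_succ_succ]
  have h2 : (k.choose (t+1) : ℤ) * (t+1) = (k.choose t) * ((k:ℤ) - t) := by
    have h := Nat.choose_succ_right_eq k t
    rcases le_or_gt t k with hle | hlt
    · have hc : ((k - t : ℕ) : ℤ) = (k:ℤ) - t := by push_cast [hle]; ring
      rw [← hc]; exact_mod_cast congrArg (Nat.cast (R := ℤ)) h
    · have h1 : k.choose (t+1) = 0 := Nat.choose_eq_zero_of_lt (by omega)
      have h2 : k.choose t = 0 := Nat.choose_eq_zero_of_lt hlt
      rw [h1, h2]; ring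
  push_cast
  linear_combination (-(afZ (x+1) t)) * h2

/-- The alternating reflection sum vanishes for odd `n`. -/
lemma reflSum (n s : ℕ) (hn : Odd n) :
    ∑ k ∈ Finset.range (n+1),
      ((-1:ℤ)^k * (n.choose k) * (k.choose s) * ((n-k).choose s)) = 0 := by
  set f : ℕ → ℤ := fun k => (-1:ℤ)^k * (n.choose k) * (k.choose s) * ((n-k).choose s) with hf
  have hrefl := Finset.sum_range_reflect f (n+1)
  have hneg : ∀ j ∈ Finset.range (n+1), f (n + 1 - 1 - j) = - f j := by
    intro j hj
    have hjn : j ≤ n := by simpa [Nat.lt_succ_iff] using hj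
    have h0 : n + 1 - 1 - j = n - j := by omega
    have h1 : n - (n - j) = j := by omega
    have h2 : n.choose (n - j) = n.choose j := Nat.choose_symm hjn
    have h3 : (-1:ℤ)^(n-j) = -(-1:ℤ)^j := by
      have e1 : (-1:ℤ)^(n-j) * (-1:ℤ)^j = (-1:ℤ)^n := by
        rw [← pow_add]; congr 1; omega
      have e2 : ((-1:ℤ)^n) = -1 := Odd.neg_one_pow hn
      have e3 : (-1:ℤ)^j * (-1:ℤ)^j = 1 := by rw [← mul_pow]; norm_num
      calc (-1:ℤ)^(n-j) = (-1:ℤ)^(n-j) * ((-1:ℤ)^j * (-1:ℤ)^j) := by rw [e3, mul_one]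
        _ = ((-1:ℤ)^(n-j) * (-1:ℤ)^j) * (-1:ℤ)^j := by ring
        _ = -(-1:ℤ)^j := by rw [e1, e2]; ring
    rw [hf]
    simp only [h0, h1, h2, h3]
    ring
  rw [Finset.sum_congr rfl hneg] at hrefl
  rw [Finset.sum_neg_distrib] at hrefl
  linarith

section Main

variable {K : Type*} [Field K]

/-- Shifted-coefficient function for the product expansion. -/
noncomputable def cf (l : K) (k t : ℕ) (x : ℤ) : K :=
  (-1:K)^k * (-1:K)^t * (k.choose t) * ((afZ x t : ℤ) : K) * l^t

lemma cf_zero (l : K) (k : ℕ) (x : ℤ) : cf l k 0 x = (-1:K)^k := by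
  simp [cf, afZ]

lemma cf_top (l : K) (k : ℕ) (x : ℤ) : cf l k (k+1) x = 0 := by
  simp [cf, Nat.choose_succ_self]

lemma cf_rec (l : K) (k t : ℕ) (x : ℤ) :
    cf l (k+1) (t+1) x
      = cf l k t (x+1) * ((((x - k + t):ℤ):K) * l) - cf l k (t+1) (x+1) := by
  have hk := keyZ k t x
  have hkK := congrArg (fun z : ℤ => (z : K)) hk
  push_cast at hkK
  unfold cf
  push_cast at hkK ⊢
  linear_combination ((-1:K)^k * (-1:K)^t * l^(t+1)) * hkK

end Main

theorem binomB_odd_vanishes_on_ker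
    {K F : Type*} [Field K] [CharZero K] [AddCommGroup F] [Module K F]
    (l : K) (D U : Module.End K F)
    (h : D * U - U * D = -(l • U))
    (n : ℕ) (hn : Odd n) (v : F) (hv : D v = 0) :
    binomB n l U D v = 0 := by
  -- the cyclic vectors
  set w : ℕ → F := fun s => (U^s) v with hw
  have hUw : ∀ s, U (w s) = w (s+1) := by
    intro s; rw [hw]; simp only; rw [pow_succ']; rfl
  -- eigenvector property
  have hDU : D * U = -(l • U) + U * D := by
    rw [← h]; abel
  have hDw : ∀ s : ℕ, D (w s) = (-(s:K) * l) • (w s) := by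
    intro s
    induction s with
    | zero => simp [hw, hv]
    | succ s ih =>
      have h0 : D (U (w s)) = (D * U) (w s) := rfl
      rw [← hUw, h0, hDU]
      simp only [LinearMap.add_apply, LinearMap.neg_apply, LinearMap.smul_apply,
        Module.End.mul_apply, ih, map_smul, hUw]
      push_cast
      module
  -- action of a single factor
  have hfact : ∀ (r s : ℕ),
      (D - U + (((r:K)) * l) • (1 : Module.End K F)) (w s)
        = (((r:K) - (s:K)) * l) • (w s) - w (s+1) := by
    intro r s
    simp only [LinearMap.add_apply, LinearMap.sub_apply, LinearMap.smul_apply,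
      Module.End.one_apply, hDw, hUw]
    module
  -- shifting the product
  have hprodShift : ∀ (k r : ℕ),
      ((List.range (k+1)).map
        (fun j : ℕ => D - U + (((j + r : ℕ) : K) * l) • (1 : Module.End K F))).prod
      = (D - U + ((r:K) * l) • (1 : Module.End K F)) *
        ((List.range k).map
          (fun j : ℕ => D - U + (((j + (r+1) : ℕ) : K) * l) • (1 : Module.End K F))).prod := by
    intro k r
    rw [List.range_succ_eq_map, List.map_cons, List.prod_cons, List.map_map]
    congr 1
    · norm_num
    · congr 1
      apply List.map_congr_left
      intro j _
      simp only [Function.comp_apply]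
      have hj : Nat.succ j + r = j + (r+1) := by omega
      rw [hj]
  -- main expansion lemma
  have hmain : ∀ (k r m : ℕ),
      (((List.range k).map (fun j : ℕ => D - U + (((j + r : ℕ) : K) * l) • (1 : Module.End K F))).prod) (w m)
        = ∑ t ∈ Finset.range (k+1), cf l k t ((r:ℤ) - (m:ℤ)) • w (m + (k - t)) := by
    intro k
    induction k with
    | zero =>
      intro r m
      simp [cf, afZ]
    | succ k ih =>
      intro r m
      rw [hprodShift k r, Module.End.mul_apply]
      have ih' := ih (r+1) m
      have hcast : ((r + 1 : ℕ) : ℤ) - (m:ℤ) = ((r:ℤ) - (m:ℤ)) + 1 := by push_cast; ring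
      rw [hcast] at ih'
      rw [ih']
      set x : ℤ := (r:ℤ) - (m:ℤ) with hx
      rw [map_sum]
      -- distribute factor over the sum
      have hterm : ∀ t ∈ Finset.range (k+1),
          (D - U + (((r:K)) * l) • (1 : Module.End K F)) (cf l k t (x+1) • w (m + (k - t)))
            = (cf l k t (x+1) * ((((x - k + t):ℤ):K) * l)) • w (m + (k - t))
              - cf l k t (x+1) • w (m + (k - t) + 1) := by
        intro t ht
        have htk : t ≤ k := by simpa [Nat.lt_succ_iff] using ht
        rw [map_smul, hfact r (m + (k - t))]
        have hc : ((r:K) - ((m + (k - t) : ℕ) : K)) = (((x - k + t):ℤ):K) := by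
          rw [hx]; push_cast [htk]; ring
        rw [hc, smul_sub, smul_smul]
      rw [Finset.sum_congr rfl hterm, Finset.sum_sub_distrib]
      -- rewrite the second (shifted) sum
      have hS2 : ∑ t ∈ Finset.range (k+1), cf l k t (x+1) • w (m + (k - t) + 1)
          = (∑ t ∈ Finset.range (k+1), cf l k (t+1) (x+1) • w (m + (k - t)))
            + cf l k 0 (x+1) • w (m + k + 1) := by
      -- sum_range_succ' : ∑_{i<N+1} g i = ∑_{i<N} g (i+1) + g 0
        rw [Finset.sum_range_succ' (fun t => cf l k t (x+1) • w (m + (k - t) + 1)) k]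
        congr 1
        · rw [Finset.sum_range_succ, cf_top, zero_smul, add_zero]
          apply Finset.sum_congr rfl
          intro t ht
          have htk : t < k := by simpa using ht
          have hidx : m + (k - (t+1)) + 1 = m + (k - t) := by omega
          rw [hidx]
      rw [hS2]
      -- decompose the target sum
      conv_rhs => rw [Finset.sum_range_succ' (fun t => cf l (k+1) t x • w (m + (k + 1 - t))) (k+1)]
      have htail : ∀ t ∈ Finset.range (k+1),
          cf l (k+1) (t+1) x • w (m + (k + 1 - (t+1)))
            = (cf l k t (x+1) * ((((x - k + t):ℤ):K) * l) - cf l k (t+1) (x+1)) • w (m + (k - t)) := by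
        intro t ht
        have hidx : m + (k + 1 - (t+1)) = m + (k - t) := by omega
        rw [hidx, cf_rec]
      rw [Finset.sum_congr rfl htail]
      have hhead : cf l (k+1) 0 x • w (m + (k + 1 - 0)) = (- cf l k 0 (x+1)) • w (m + k + 1) := by
        rw [cf_zero, cf_zero]
        have hidx : m + (k + 1 - 0) = m + k + 1 := by omega
        rw [hidx, pow_succ]
        module
      rw [hhead]
      simp only [sub_smul]
      rw [Finset.sum_sub_distrib]
      module
  -- now assemble
  rw [binomB, LinearMap.sum_apply]
  have hterm : ∀ k ∈ Finset.range (n+1),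
      (n.choose k • (((List.range k).map (fun j : ℕ => D - U + ((j : K) * l) • (1 : Module.End K F))).prod * U ^ (n - k))) v
        = ∑ t ∈ Finset.range (n+1),
            ((n.choose k : K) * cf l k t (-((n - k : ℕ) : ℤ))) • w (n - t) := by
    intro k hk
    have hkn : k ≤ n := by simpa [Nat.lt_succ_iff] using hk
    rw [LinearMap.smul_apply, Module.End.mul_apply]
    have hfun : (fun j : ℕ => D - U + ((j : K) * l) • (1 : Module.End K F))
        = (fun j : ℕ => D - U + (((j + 0 : ℕ) : K) * l) • (1 : Module.End K F)) := by
      funext j; norm_num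
    have hm := hmain k 0 (n - k)
    have hx0 : ((0:ℕ):ℤ) - ((n - k : ℕ):ℤ) = -((n - k : ℕ) : ℤ) := by push_cast; ring
    rw [hx0] at hm
    rw [hfun, show ((U ^ (n-k)) v) = w (n - k) from rfl, hm]
    rw [← Nat.cast_smul_eq_nsmul K, Finset.smul_sum]
    have step1 : ∀ t ∈ Finset.range (k+1),
        (n.choose k : K) • cf l k t (-((n - k : ℕ) : ℤ)) • w (n - k + (k - t))
          = ((n.choose k : K) * cf l k t (-((n - k : ℕ) : ℤ))) • w (n - t) := by
      intro t ht
      have htk : t ≤ k := by simpa [Nat.lt_succ_iff] using ht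
      have hidx : n - k + (k - t) = n - t := by omega
      rw [smul_smul, hidx]
    rw [Finset.sum_congr rfl step1]
    exact Finset.sum_subset (Finset.range_subset_range.mpr (by omega))
      (fun t _ ht2 => by
        have hkt : k < t := by
          simp only [Finset.mem_range, Nat.lt_succ_iff] at ht2
          omega
        simp [cf, Nat.choose_eq_zero_of_lt hkt])
  rw [Finset.sum_congr rfl hterm, Finset.sum_comm]
  apply Finset.sum_eq_zero
  intro t _
  rw [← Finset.sum_smul]
  have hcoef : ∑ k ∈ Finset.range (n+1), (n.choose k : K) * cf l k t (-((n - k : ℕ) : ℤ))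
      = ((t.factorial : K) * l^t)
        * ((∑ k ∈ Finset.range (n+1),
            ((-1:ℤ)^k * (n.choose k) * (k.choose t) * ((n-k).choose t)) : ℤ) : K) := by
    rw [Int.cast_sum, Finset.mul_sum]
    apply Finset.sum_congr rfl
    intro k _
    rw [cf, afZ_neg_nat]
    have hsq : (-1:K)^t * (-1:K)^t = 1 := by rw [← mul_pow]; norm_num
    push_cast
    linear_combination (((-1:K)^k) * (n.choose k : K) * (k.choose t : K)
      * (((n-k).choose t : ℕ):K) * (t.factorial : K) * l^t) * hsq
  rw [hcoef, reflSum n t hn]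
  simp
end

section
/- Let D, U be linear operators on a vector space F over a field of characteristic zero with [D,U] = -λU, and let F₀ = ker D. Then for every even n > 0 and every v ∈ F₀, B(n,λ,U,D)v = (n-1)!! (-2λU)^{n/2} v, where (2m-1)!! = 1·3·…·(2m-1) and B is as in the binomial-type definition. -/
open Finset
open scoped Nat
set_option linter.unusedSectionVars false
set_option linter.unreachableTactic false
set_option linter.unusedTactic false
set_option maxHeartbeats 1000000



lemma dF_cast (m k : ℕ) :
    ((m.descFactorial (k+1) : ℤ)) = ((m : ℤ) - k) * m.descFactorial k := by
  rcases le_or_gt k m with hk | hk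
  · rw [Nat.descFactorial_succ, Nat.cast_mul, Nat.cast_sub hk]
  · rw [Nat.descFactorial_eq_zero_iff_lt.2 hk,
      Nat.descFactorial_eq_zero_iff_lt.2 (hk.trans (Nat.lt_succ_self k))]
    simp

lemma dF_shift (n k : ℕ) :
    (n - k) * n.descFactorial k = n * (n - 1).descFactorial k := by
  induction k with
  | zero => simp
  | succ k ih =>
    rw [Nat.descFactorial_succ, Nat.descFactorial_succ]
    calc (n - (k+1)) * ((n - k) * n.descFactorial k)
        = (n - (k+1)) * (n * (n-1).descFactorial k) := by rw [ih]
      _ = n * ((n - 1 - k) * (n-1).descFactorial k) := by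
          rw [show n - (k+1) = n - 1 - k by omega]; ring

lemma dF_half_succ (s : ℕ) :
    (s + 1) * (2*s+1).descFactorial s = (2*s+1) * (2*s).descFactorial s := by
  have := dF_shift (2*s+1) s
  rwa [show 2*s+1-s = s+1 by omega, show 2*s+1-1 = 2*s by omega] at this

lemma dF_top (s : ℕ) :
    (2*s+2).descFactorial (s+1) = 2 * (2*s+1) * (2*s).descFactorial s := by
  refine Nat.eq_of_mul_eq_mul_left (Nat.succ_pos s) ?_
  have e1 : (2*s+2).descFactorial (s+1) = (2*s+2) * (2*s+1).descFactorial s :=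
    Nat.succ_descFactorial_succ (2*s+1) s
  calc (s+1) * (2*s+2).descFactorial (s+1)
      = (2*s+2) * ((s+1) * (2*s+1).descFactorial s) := by rw [e1]; ring
    _ = (2*s+2) * ((2*s+1) * (2*s).descFactorial s) := by rw [dF_half_succ]
    _ = (s+1) * (2 * (2*s+1) * (2*s).descFactorial s) := by ring

lemma identI1 (n s : ℕ) :
    (n+1).choose (2*s+1) * (2*s+2).descFactorial (s+1)
      = 2 * (n+1) * (n.choose (2*s) * (2*s).descFactorial s) := by
  refine Nat.eq_of_mul_eq_mul_left (Nat.succ_pos s) ?_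
  have e1 : (2*s+2).descFactorial (s+1) = (2*s+2) * (2*s+1).descFactorial s :=
    Nat.succ_descFactorial_succ (2*s+1) s
  have e3 : (n+1) * n.choose (2*s) = (n+1).choose (2*s+1) * (2*s+1) :=
    Nat.add_one_mul_choose_eq n (2*s)
  calc (s+1) * ((n+1).choose (2*s+1) * (2*s+2).descFactorial (s+1))
      = (n+1).choose (2*s+1) * (2*s+2) * ((s+1) * (2*s+1).descFactorial s) := by rw [e1]; ring
    _ = (n+1).choose (2*s+1) * (2*s+2) * ((2*s+1) * (2*s).descFactorial s) := by rw [dF_half_succ]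
    _ = 2 * ((n+1) * n.choose (2*s)) * ((s+1) * (2*s).descFactorial s) := by rw [e3]; ring
    _ = (s+1) * (2 * (n+1) * (n.choose (2*s) * (2*s).descFactorial s)) := by ring

lemma dF_doubleFactorial : ∀ s : ℕ, (2*s).descFactorial s = 2^s * (2*s-1)‼
  | 0 => rfl
  | (s+1) => by
    rw [show 2*(s+1) = 2*s+2 by ring, dF_top, dF_doubleFactorial s,
      show 2*s+2-1 = 2*s+1 by omega]
    have hdf : (2*s+1)‼ = (2*s+1) * (2*s-1)‼ := by
      rcases s with _ | t
      · rfl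
      · rw [show 2*(t+1)+1 = (2*t+1)+2 by ring, Nat.doubleFactorial_add_two]
        congr 2 <;> omega
    rw [hdf]
    ring

/-- integer coefficient of the closed form -/

def cKn (n m r : ℕ) : ℕ := n.choose (2*r) * (2*r).descFactorial r * m.descFactorial (n - 2*r)

section G
variable {K F : Type*} [Field K] [CharZero K] [AddCommGroup F] [Module K F]
variable (l : K) (U : Module.End K F) (v : F)

noncomputable def Gv (n m : ℕ) : F :=
  ∑ r ∈ range (n+1), ((-1:K)^(n-r) * (cKn n m r : K) * l^(n-r)) • ((U^(m+r)) v)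

lemma dF_castK (m k : ℕ) :
    ((m.descFactorial (k+1) : K)) = ((m : K) - k) * m.descFactorial k := by
  have := dF_cast m k
  have h2 := congrArg (fun z : ℤ => (z : K)) this
  push_cast at h2 ⊢
  exact h2

lemma Grec (n m : ℕ) :
    Gv l U v (n+2) m
      = (((n:K) + 1 - (m:K)) * l) • Gv l U v (n+1) m
        - (2 * ((n:K)+1) * l) • Gv l U v n (m+1) := by
  classical
  set a : ℕ → F := fun r => ((-1:K)^(n+2-r) * (cKn (n+2) m r : K) * l^(n+2-r)) • ((U^(m+r)) v)
    with ha
  set b : ℕ → F := fun r =>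
    ((((n:K) + 1 - (m:K)) * l) * ((-1:K)^(n+1-r) * (cKn (n+1) m r : K) * l^(n+1-r)))
      • ((U^(m+r)) v) with hb
  set d : ℕ → F := fun r =>
    ((2 * ((n:K)+1) * l) * ((-1:K)^(n-r) * (cKn n (m+1) r : K) * l^(n-r)))
      • ((U^(m+1+r)) v) with hd
  have hgoal : Gv l U v (n+2) m = ∑ r ∈ range (n+3), a r := rfl
  have hG1 : (((n:K) + 1 - (m:K)) * l) • Gv l U v (n+1) m = ∑ r ∈ range (n+2), b r := by
    rw [Gv, Finset.smul_sum]
    refine Finset.sum_congr rfl fun r _ => ?_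
    rw [hb, smul_smul]
  have hG2 : (2 * ((n:K)+1) * l) • Gv l U v n (m+1) = ∑ r ∈ range (n+1), d r := by
    rw [Gv, Finset.smul_sum]
    refine Finset.sum_congr rfl fun r _ => ?_
    rw [hd, smul_smul]
  rw [hgoal, hG1, hG2]
  -- key termwise identity
  have hstep : ∀ s, s < n + 2 → a (s+1) + d s = b (s+1) := by
    intro s hs
    rcases lt_trichotomy n (2*s) with hcase | hcase | hcase
    · -- n < 2s : everything vanishes
      have z1 : (n+2).choose (2*(s+1)) = 0 := Nat.choose_eq_zero_of_lt (by omega)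
      have z2 : n.choose (2*s) = 0 := Nat.choose_eq_zero_of_lt (by omega)
      have z3 : (n+1).choose (2*(s+1)) = 0 := Nat.choose_eq_zero_of_lt (by omega)
      simp [ha, hb, hd, cKn, z1, z2, z3]
    · -- n = 2s : boundary case
      subst hcase
      have c1 : cKn (2*s+2) m (s+1) = (2*s+2).descFactorial (s+1) := by
        simp [cKn, show 2*(s+1) = 2*s+2 by ring]
      have c2 : cKn (2*s) (m+1) s = (2*s).descFactorial s := by
        simp [cKn]
      have c3 : cKn (2*s+1) m (s+1) = 0 := by
        simp [cKn, show 2*(s+1) = 2*s+2 by ring,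
          Nat.choose_eq_zero_of_lt (show 2*s+1 < 2*s+2 by omega)]
      rw [ha, hb, hd]
      simp only [c1, c2, c3, Nat.cast_zero, mul_zero, zero_mul, zero_smul]
      rw [show 2*s+2-(s+1) = s+1 by omega, show 2*s-s = s by omega,
        show m+1+s = m+(s+1) by omega, ← add_smul]
      have hft : ((2*s+2).descFactorial (s+1) : K) = 2*(2*(s:K)+1) * (2*s).descFactorial s := by
        rw [dF_top]; push_cast; ring
      rw [hft]
      have : ((-1:K))^(s+1) = -(-1:K)^s := by rw [pow_succ]; ring
      rw [this, pow_succ]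
      convert zero_smul K ((U^(m+(s+1))) v) using 2
      push_cast
      ring
    · -- 2s < n : generic case
      have h2s : 2*s + 1 ≤ n := by omega
      rw [ha, hb, hd]
      simp only
      rw [show m+1+s = m+(s+1) by omega, ← add_smul]
      congr 1
      simp only [cKn]
      rw [show n+2-(s+1) = (n-s)+1 by omega, show n+1-(s+1) = n-s by omega,
        show n+2-2*(s+1) = n-2*s by omega, show n+1-2*(s+1) = n-2*s-1 by omega,
        show 2*(s+1) = 2*s+2 by ring]
      push_cast
      have F1 : ((n+2).choose (2*s+2) : K) = ((n+1).choose (2*s+1) : K) + ((n+1).choose (2*s+2) : K) := by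
        rw [show ((n:ℕ)+2) = (n+1)+1 from rfl, show (2*s+2) = (2*s+1)+1 from rfl,
          Nat.choose_succ_succ]
        push_cast; ring
      have F2 : (m.descFactorial (n - 2*s) : K)
          = ((m:K) - (n:K) + 2*(s:K) + 1) * m.descFactorial (n-2*s-1) := by
        have := dF_castK (K := K) m (n-2*s-1)
        rw [show (n-2*s-1)+1 = n-2*s by omega] at this
        rw [this]
        have : ((n-2*s-1 : ℕ) : K) = (n:K) - 2*(s:K) - 1 := by
          rw [Nat.cast_sub (by omega : 1 ≤ n - 2*s), Nat.cast_sub (by omega : 2*s ≤ n)]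
          push_cast; ring
        rw [this]; ring
      have F3 : ((m+1).descFactorial (n - 2*s) : K) = ((m:K)+1) * m.descFactorial (n-2*s-1) := by
        have := Nat.succ_descFactorial_succ m (n-2*s-1)
        rw [show (n-2*s-1)+1 = n-2*s by omega] at this
        rw [this]; push_cast; ring
      have F4 : ((n+1).choose (2*s+1) : K) * ((2*s+2).descFactorial (s+1) : K)
          = 2*((n:K)+1) * ((n.choose (2*s) : K) * ((2*s).descFactorial s : K)) := by
        have := identI1 n s
        have h2 := congrArg (fun z : ℕ => (z : K)) this
        push_cast at h2
        linear_combination h2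
      have F5 : ((n+1).choose (2*s+2) : K) * (2*(s:K)+2)
          = ((n+1).choose (2*s+1) : K) * ((n:K) - 2*(s:K)) := by
        have := Nat.choose_succ_right_eq (n+1) (2*s+1)
        have h2 := congrArg (fun z : ℕ => (z : K)) this
        push_cast at h2
        have hsub : ((n - 2*s : ℕ) : K) = (n:K) - 2*(s:K) := by
          rw [Nat.cast_sub (by omega)]; push_cast; ring
        rw [hsub] at h2
        linear_combination h2
      set S : K := (-1:K)^(n-s) with hS
      set L : K := l^(n-s) with hL
      rw [pow_succ, pow_succ]
      linear_combination
        (-(S*l*L) * ((n+2).choose (2*s+2) : K) * ((2*s+2).descFactorial (s+1):K)) * F2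
        + (2*((n:K)+1)*l*S*L*((n.choose (2*s)):K)*((2*s).descFactorial s : K)) * F3
        - (S*l*L*((m:K)+1)*(m.descFactorial (n-2*s-1):K)) * F4
        + (-(S*l*L)*((2*s+2).descFactorial (s+1):K)*((m:K) - (n:K) + 2*(s:K) + 1)*(m.descFactorial (n-2*s-1):K)) * F1
        - (S*l*L*((2*s+2).descFactorial (s+1):K)*(m.descFactorial (n-2*s-1):K)) * F5
  have h0 : a 0 = b 0 := by
    rw [ha, hb]
    simp only [cKn, Nat.choose_zero_right, Nat.mul_zero, Nat.descFactorial_zero,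
      Nat.sub_zero, one_mul, mul_one, Nat.add_sub_cancel, Nat.add_zero, add_zero]
    congr 1
    have F0 : ((m.descFactorial (n+2) : K)) = ((m:K) - (n:K) - 1) * m.descFactorial (n+1) := by
      have := dF_castK (K := K) m (n+1)
      rw [this]; push_cast; ring
    linear_combination (-((-1:K)^(n+1)) * l^(n+1) * l) * F0
  have hdext : d (n+1) = 0 := by
    rw [hd]
    simp [cKn, Nat.choose_eq_zero_of_lt (show n < 2*(n+1) by omega)]
  have hbext : b (n+2) = 0 := by
    rw [hb]
    simp [cKn, Nat.choose_eq_zero_of_lt (show n+1 < 2*(n+2) by omega)]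
  calc ∑ r ∈ range (n+3), a r
      = ∑ r ∈ range (n+2), a (r+1) + a 0 := Finset.sum_range_succ' a (n+2)
    _ = ∑ r ∈ range (n+2), (b (r+1) - d r) + b 0 := by
        rw [h0]
        congr 1
        refine Finset.sum_congr rfl fun r hr => ?_
        exact eq_sub_of_add_eq (hstep r (mem_range.mp hr))
    _ = (∑ r ∈ range (n+2), b (r+1) + b 0) - ∑ r ∈ range (n+1), d r := by
        rw [Finset.sum_sub_distrib]
        have hdx : ∑ r ∈ range (n+2), d r = ∑ r ∈ range (n+1), d r := by
          rw [Finset.sum_range_succ, hdext, add_zero]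
        rw [hdx]
        abel
    _ = ∑ r ∈ range (n+3), b r - ∑ r ∈ range (n+1), d r := by
        rw [Finset.sum_range_succ' b (n+2)]
    _ = ∑ r ∈ range (n+2), b r - ∑ r ∈ range (n+1), d r := by
        rw [Finset.sum_range_succ, hbext, add_zero]
end G

section Aux
variable {K F : Type*} [Field K] [CharZero K] [AddCommGroup F] [Module K F]
variable (l : K) (D U : Module.End K F)

/-- the product `P_k`. -/
noncomputable def bP (k : ℕ) : Module.End K F :=
  ((List.range k).map fun j : ℕ => D - U + ((j : K) * l) • (1 : Module.End K F)).prod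

lemma bP_zero : bP l D U 0 = 1 := by simp [bP]

lemma bP_succ (k : ℕ) :
    bP l D U (k + 1) = bP l D U k * (D - U + (((k : K)) * l) • 1) := by
  simp [bP, List.range_succ]

lemma binomB_apply (n : ℕ) (w : F) :
    binomB n l U D w = ∑ k ∈ range (n + 1), n.choose k • (bP l D U k) ((U ^ (n - k)) w) := by
  rw [binomB]
  rw [LinearMap.sum_apply]
  refine Finset.sum_congr rfl fun k _ => ?_
  rw [← Nat.cast_smul_eq_nsmul K, LinearMap.smul_apply, Module.End.mul_apply,
    Nat.cast_smul_eq_nsmul]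
  rfl




lemma eigD (h : D * U - U * D = -(l • U)) {w : F} {μ : K} (hw : D w = μ • w) (m : ℕ) :
    D ((U ^ m) w) = (μ - (m : K) * l) • ((U ^ m) w) := by
  induction m with
  | zero => simpa using hw
  | succ m ih =>
    rw [sub_eq_iff_eq_add] at h
    have hU : (U ^ (m+1)) w = U ((U ^ m) w) := by rw [pow_succ']; rfl
    rw [hU]
    have h2 := congrArg (fun f : Module.End K F => f ((U ^ m) w)) h
    simp only [Module.End.mul_apply, LinearMap.add_apply, LinearMap.neg_apply,
      LinearMap.smul_apply] at h2
    rw [h2, ih, map_smul]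
    push_cast
    module

lemma factor_apply (h : D * U - U * D = -(l • U)) {w : F} {μ : K} (hw : D w = μ • w)
    (k m : ℕ) :
    (D - U + ((k : K) * l) • 1) ((U ^ m) w)
      = (μ + ((k : K) - (m : K)) * l) • ((U ^ m) w) - (U ^ (m + 1)) w := by
  have hU : (U ^ (m+1)) w = U ((U ^ m) w) := by rw [pow_succ']; rfl
  simp only [LinearMap.add_apply, LinearMap.sub_apply, LinearMap.smul_apply,
    Module.End.one_apply, eigD l D U h hw m, hU]
  module

lemma pascal_sum {M : Type*} [AddCommMonoid M] (n : ℕ) (a : ℕ → M) :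
    ∑ k ∈ range (n + 2), (n + 1).choose k • a k
      = ∑ k ∈ range (n + 1), n.choose k • (a k + a (k + 1)) := by
  have e1 : ∑ k ∈ range (n+2), n.choose k • a k
      = ∑ k ∈ range (n+1), n.choose (k+1) • a (k+1) + a 0 := by
    simpa using Finset.sum_range_succ' (fun k => n.choose k • a k) (n+1)
  have e2 : ∑ k ∈ range (n+2), n.choose k • a k = ∑ k ∈ range (n+1), n.choose k • a k := by
    rw [Finset.sum_range_succ]; simp
  calc ∑ k ∈ range (n + 2), (n + 1).choose k • a k
      = ∑ k ∈ range (n+1), (n+1).choose (k+1) • a (k+1) + a 0 := by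
        simpa using Finset.sum_range_succ' (fun k => (n+1).choose k • a k) (n+1)
    _ = ∑ k ∈ range (n+1), (n.choose k • a (k+1) + n.choose (k+1) • a (k+1)) + a 0 := by
        simp [Nat.choose_succ_succ, add_smul]
    _ = ∑ k ∈ range (n+1), n.choose k • a (k+1)
          + (∑ k ∈ range (n+1), n.choose (k+1) • a (k+1) + a 0) := by
        rw [Finset.sum_add_distrib, add_assoc]
    _ = ∑ k ∈ range (n+1), n.choose k • a (k+1) + ∑ k ∈ range (n+1), n.choose k • a k := by
        rw [← e1, e2]
    _ = ∑ k ∈ range (n + 1), n.choose k • (a k + a (k + 1)) := by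
        simp only [smul_add]
        rw [Finset.sum_add_distrib]
        exact add_comm _ _


lemma lemA (h : D * U - U * D = -(l • U)) {w : F} {μ : K} (hw : D w = μ • w) (n : ℕ) :
    binomB (n + 1) l U D w
      = ∑ k ∈ range (n + 1),
          n.choose k • ((μ + (2 * (k : K) - (n : K)) * l) • (bP l D U k) ((U ^ (n - k)) w)) := by
  rw [binomB_apply]
  rw [pascal_sum n (fun k => (bP l D U k) ((U ^ (n + 1 - k)) w))]
  refine Finset.sum_congr rfl fun k hk => ?_
  have hk' : k ≤ n := by simpa [Nat.lt_succ_iff] using hk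
  congr 1
  have h1 : n + 1 - k = (n - k) + 1 := by omega
  have h2 : n + 1 - (k + 1) = n - k := by omega
  rw [h1, h2, bP_succ, Module.End.mul_apply, factor_apply l D U h hw k (n - k),
    map_sub, map_smul]
  have h3 : ((n - k : ℕ) : K) = (n : K) - (k : K) := by
    push_cast [Nat.cast_sub hk']; ring
  rw [h3]
  have h4 : (μ + ((k : K) - ((n : K) - (k : K))) * l) = (μ + (2 * (k : K) - (n : K)) * l) := by
    ring
  rw [h4]
  abel

lemma lemR (h : D * U - U * D = -(l • U)) {w : F} {μ : K} (hw : D w = μ • w) (n : ℕ) :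
    binomB (n + 2) l U D w
      = (μ + ((n : K) + 1) * l) • binomB (n + 1) l U D w
        - (2 * ((n : K) + 1) * l) • binomB n l U D (U w) := by
  have hA := lemA l D U h hw (n + 1)
  rw [hA, binomB_apply l D U (n+1) w, binomB_apply l D U n (U w)]
  rw [Finset.smul_sum, Finset.smul_sum]
  simp only [← Nat.cast_smul_eq_nsmul K, smul_smul]
  rw [eq_sub_iff_add_eq]
  have hsecond : ∑ k ∈ range (n + 2),
        ((2 * ((n : K) + 1) * l) * ((n.choose k : K))) • (bP l D U k) ((U ^ (n + 1 - k)) w)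
      = ∑ k ∈ range (n + 1),
        ((2 * ((n : K) + 1) * l) * ((n.choose k : K))) • (bP l D U k) ((U ^ (n - k)) (U w)) := by
    rw [Finset.sum_range_succ]
    simp only [Nat.choose_succ_self, Nat.cast_zero, mul_zero, zero_smul, add_zero]
    refine Finset.sum_congr rfl fun k hk => ?_
    have hk' : k ≤ n := by simpa [Nat.lt_succ_iff] using hk
    have h1 : n + 1 - k = (n - k) + 1 := by omega
    rw [h1, pow_succ, Module.End.mul_apply]
  rw [← hsecond, ← Finset.sum_add_distrib]
  refine Finset.sum_congr rfl fun k hk => ?_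
  have hk' : k ≤ n + 1 := by simpa [Nat.lt_succ_iff] using hk
  rw [← add_smul]
  congr 1
  have hc : (n.choose k : K) * ((n : K) + 1) = ((n+1).choose k : K) * (((n : K) + 1) - (k : K)) := by
    have := Nat.choose_mul_succ_eq n k
    have hcast : (((n + 1 - k : ℕ) : K)) = ((n : K) + 1) - (k : K) := by
      rw [Nat.cast_sub hk']; push_cast; ring
    calc (n.choose k : K) * ((n : K) + 1) = ((n.choose k * (n+1) : ℕ) : K) := by push_cast; ring
      _ = (((n+1).choose k * (n + 1 - k) : ℕ) : K) := by rw [this]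
      _ = ((n+1).choose k : K) * (((n : K) + 1) - (k : K)) := by push_cast [Nat.cast_sub hk']; ring
  push_cast
  linear_combination (2 : K) * l * hc


end Aux

section Main
variable {K F : Type*} [Field K] [CharZero K] [AddCommGroup F] [Module K F]
variable (l : K) (D U : Module.End K F)

lemma binomB_zero (w : F) : binomB 0 l U D w = w := by
  rw [binomB_apply]
  simp [bP]

lemma binomB_one (w : F) : binomB 1 l U D w = D w := by
  rw [binomB_apply]
  rw [Finset.sum_range_succ, Finset.sum_range_succ, Finset.sum_range_zero]
  simp [bP, List.range_succ]

lemma mainG (h : D * U - U * D = -(l • U)) (v : F) (hv : D v = 0) :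
    ∀ n m : ℕ, binomB n l U D ((U ^ m) v) = Gv l U v n m := by
  have hv0 : D v = (0 : K) • v := by rw [hv, zero_smul]
  have base0 : ∀ m : ℕ, binomB 0 l U D ((U ^ m) v) = Gv l U v 0 m := by
    intro m
    rw [binomB_zero, Gv]
    simp [cKn]
  have base1 : ∀ m : ℕ, binomB 1 l U D ((U ^ m) v) = Gv l U v 1 m := by
    intro m
    rw [binomB_one, eigD l D U h hv0 m, Gv]
    rw [Finset.sum_range_succ, Finset.sum_range_succ, Finset.sum_range_zero]
    have c1 : cKn 1 m 0 = m := by simp [cKn]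
    have c2 : cKn 1 m 1 = 0 := by simp [cKn]
    rw [c1, c2]
    simp
  have key : ∀ n : ℕ,
      (∀ m : ℕ, binomB n l U D ((U ^ m) v) = Gv l U v n m) ∧
      (∀ m : ℕ, binomB (n+1) l U D ((U ^ m) v) = Gv l U v (n+1) m) := by
    intro n
    induction n with
    | zero => exact ⟨base0, base1⟩
    | succ n ih =>
      refine ⟨ih.2, fun m => ?_⟩
      have hw : D ((U ^ m) v) = ((0 : K) - (m : K) * l) • ((U ^ m) v) := eigD l D U h hv0 m
      have hUw : U ((U ^ m) v) = (U ^ (m+1)) v := by rw [pow_succ']; rfl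
      rw [lemR l D U h hw n, hUw, ih.1 (m+1), ih.2 m, Grec l U v n m]
      have hsc : ((0 : K) - (m : K) * l + ((n : K) + 1) * l) = (((n:K) + 1 - (m:K)) * l) := by
        ring
      rw [hsc]
  exact fun n => (key n).1

end Main

theorem binomB_even_on_ker
    {K F : Type*} [Field K] [CharZero K] [AddCommGroup F] [Module K F]
    (l : K) (D U : Module.End K F)
    (h : D * U - U * D = -(l • U))
    (n : ℕ) (hn : Even n) (hpos : 0 < n) (v : F) (hv : D v = 0) :
    binomB n l U D v = Nat.doubleFactorial (n - 1) • (((-(2 * l)) • U) ^ (n / 2)) v := by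
  obtain ⟨s, hs⟩ := hn
  have hn2 : n = 2 * s := by omega
  subst hn2
  have hmain := mainG l D U h v hv (2*s) 0
  have hU0 : (U ^ (0:ℕ)) v = v := by simp
  rw [hU0] at hmain
  rw [hmain, Gv]
  have hsingle : ∑ r ∈ range (2*s+1), ((-1:K)^(2*s-r) * (cKn (2*s) 0 r : K) * l^(2*s-r)) • ((U^(0+r)) v)
      = ((-1:K)^s * (cKn (2*s) 0 s : K) * l^s) • ((U^(0+s)) v) := by
    rw [Finset.sum_eq_single s]
    · rw [show 2*s-s = s by omega]
    · intro r hr hne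
      have : cKn (2*s) 0 r = 0 := by
        rcases lt_trichotomy (2*r) (2*s) with hlt | heq | hgt
        · have : (0:ℕ).descFactorial (2*s - 2*r) = 0 :=
            Nat.descFactorial_eq_zero_iff_lt.2 (by omega)
          simp [cKn, this]
        · omega
        · simp [cKn, Nat.choose_eq_zero_of_lt (by omega : 2*s < 2*r)]
      rw [this]
      simp
    · intro hs'
      exact absurd (Finset.mem_range.2 (by omega)) hs'
  rw [hsingle]
  have hc : cKn (2*s) 0 s = (2*s).descFactorial s := by
    simp [cKn]
  rw [hc, show (0:ℕ) + s = s by omega]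
  have hpow : ((-(2 * l)) • U) ^ s = ((-(2*l))^s) • (U ^ s) := smul_pow _ _ _
  rw [show 2*s/2 = s by omega, hpow, LinearMap.smul_apply,
    ← Nat.cast_smul_eq_nsmul K, smul_smul, dF_doubleFactorial s]
  congr 1
  rw [show (-(2*l))^s = (-1:K)^s * 2^s * l^s by rw [neg_pow, mul_pow]; ring]
  push_cast
  ring
end

section
/- Let D, U be linear operators on a vector space F over a field of characteristic zero with [D,U] = -λU, and let F₀ = ker D. Then for all n ≥ 0 and all v ∈ F₀, (2D + λnI) B(n,λ,U,D) v = 0. -/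
/-! On the vectors `Uᵐ v` the operator `D` acts as the scalar `-mλ`, so each factor
`D - U + jλ` sends `Uᵐ v` to `(j - m)λ Uᵐ v - Uᵐ⁺¹ v`. Expanding, `B(n) v = Σⱼ cⱼ λʲ Uⁿ⁻ʲ v` with
integer coefficients `cⱼ = Σₖ (-1)ᵏ C(n,k) C(k,j) (n-k)ⱼ`, where `(x)ⱼ` is the falling factorial,
and `2D + nλ` multiplies the `j`-th term by `(2j - n)λ`. Trinomial revision turns `cⱼ` into
`(-1)ʲ C(n,j) (n-j)ⱼ` times an alternating sum of the binomial coefficients `C(n-2j, i)`, so `cⱼ`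
vanishes unless `n = 2j`. -/

open Finset
open scoped Nat

theorem Nat.choose_mul_choose_sub_comm (a i j : ℕ) :
    a.choose i * (a - i).choose j = a.choose j * (a - j).choose i := by
  have hi := Nat.choose_mul (n := a) (Nat.le_add_right i j)
  have hj := Nat.choose_mul (n := a) (Nat.le_add_left j i)
  rw [Nat.add_sub_cancel_left] at hi
  rw [Nat.add_sub_cancel] at hj
  rw [← hi, ← hj, Nat.choose_symm_add]

theorem Nat.choose_add_mul_choose_mul_descFactorial (n i j : ℕ) :
    n.choose (j + i) * (j + i).choose j * (n - (j + i)).descFactorial j =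
      n.choose j * (n - j).descFactorial j * (n - 2 * j).choose i := by
  rw [Nat.choose_mul (Nat.le_add_right j i), Nat.add_sub_cancel_left,
    Nat.descFactorial_eq_factorial_mul_choose, Nat.descFactorial_eq_factorial_mul_choose,
    ← Nat.sub_sub, show n - 2 * j = n - j - j by omega]
  calc _ = n.choose j * j ! * ((n - j).choose i * (n - j - i).choose j) := by ring
    _ = _ := by rw [Nat.choose_mul_choose_sub_comm]; ring

theorem Int.alternating_sum_choose_mul_descFactorial_eq_zero {n j : ℕ} (hn : n ≠ 2 * j) :
    ∑ k ∈ Finset.range (n + 1),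
      ((-1) ^ k * n.choose k * k.choose j * (n - k).descFactorial j : ℤ) = 0 := by
  rcases lt_or_gt_of_ne hn with hlt | hgt
  · refine sum_eq_zero fun k _ => ?_
    rcases lt_or_ge k j with hkj | hjk
    · simp [Nat.choose_eq_zero_of_lt hkj]
    · simp [Nat.descFactorial_eq_zero_iff_lt.mpr (show n - k < j by omega)]
  · have hhead : ∑ k ∈ Finset.range j,
        ((-1) ^ k * n.choose k * k.choose j * (n - k).descFactorial j : ℤ) = 0 :=
      sum_eq_zero fun k hk => by simp [Nat.choose_eq_zero_of_lt (mem_range.mp hk)]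
    have halt : ∑ i ∈ Finset.range (n + 1 - j), ((-1) ^ i * (n - 2 * j).choose i : ℤ) = 0 := by
      rw [← sum_range_add_sum_Ico _ (show n - 2 * j + 1 ≤ n + 1 - j by omega),
        Int.alternating_sum_range_choose_of_ne (by omega), zero_add]
      exact sum_eq_zero fun i hi => by simp [Nat.choose_eq_zero_of_lt (mem_Ico.mp hi).1]
    rw [← sum_range_add_sum_Ico _ (show j ≤ n + 1 by omega), hhead, zero_add,
      sum_Ico_eq_sum_range]
    calc _ = ∑ i ∈ Finset.range (n + 1 - j),
          ((-1) ^ j * n.choose j * (n - j).descFactorial j : ℤ) *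
            ((-1) ^ i * (n - 2 * j).choose i) := by
          refine sum_congr rfl fun i _ => ?_
          have := congrArg (Nat.cast (R := ℤ)) (Nat.choose_add_mul_choose_mul_descFactorial n i j)
          push_cast at this
          rw [pow_add]
          linear_combination ((-1) ^ j * (-1) ^ i : ℤ) * this
      _ = 0 := by rw [← mul_sum, halt, mul_zero]

section ShiftedProd

variable {K A : Type*} [CommRing K] [Ring A] [Algebra K A]

def shiftedProd (l : K) (a : A) (k : ℕ) : A :=
  ((List.range k).map fun j : ℕ => a + ((j : K) * l) • (1 : A)).prod

lemma shiftedProd_succ (l : K) (a : A) (k : ℕ) :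
    shiftedProd l a (k + 1) = shiftedProd l a k * (a + ((k : K) * l) • 1) := by
  simp [shiftedProd, List.range_succ]

end ShiftedProd

lemma binomB_eq_sum_shiftedProd {K A : Type*} [Field K] [Ring A] [Algebra K A]
    (n : ℕ) (l : K) (U D : A) :
    binomB n l U D = ∑ k ∈ range (n + 1), n.choose k • (shiftedProd l (D - U) k * U ^ (n - k)) :=
  rfl

section Coeff

variable {K : Type*} [CommRing K]

def shiftedProdCoeff (l : K) (k m j : ℕ) : K :=
  (-1) ^ k * k.choose j * m.descFactorial j * l ^ j

lemma shiftedProdCoeff_of_lt (l : K) {k j : ℕ} (m : ℕ) (h : k < j) :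
    shiftedProdCoeff l k m j = 0 := by
  simp [shiftedProdCoeff, Nat.choose_eq_zero_of_lt h]

lemma shiftedProdCoeff_succ_zero (l : K) (k m : ℕ) :
    shiftedProdCoeff l (k + 1) m 0 = -shiftedProdCoeff l k (m + 1) 0 := by
  simp [shiftedProdCoeff, pow_succ]

lemma shiftedProdCoeff_succ_succ (l : K) {k j : ℕ} (m : ℕ) (hj : j ≤ k) :
    shiftedProdCoeff l (k + 1) m (j + 1) =
      ((k : K) - m) * l * shiftedProdCoeff l k m j - shiftedProdCoeff l k (m + 1) (j + 1) := by
  have hchoose := congrArg (Nat.cast (R := K)) (Nat.choose_succ_right_eq k j)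
  push_cast [Nat.cast_sub hj] at hchoose
  have hdesc : (m.descFactorial (j + 1) : K) = ((m : K) - j) * m.descFactorial j := by
    simp only [← descPochhammer_eval_eq_descFactorial, descPochhammer_succ_eval, mul_comm]
  simp only [shiftedProdCoeff, Nat.choose_succ_succ, Nat.succ_descFactorial_succ, hdesc]
  push_cast
  linear_combination (-1) ^ k * (m.descFactorial j : K) * l ^ (j + 1) * hchoose

end Coeff

section Operators

variable {K F : Type*} [CommRing K] [AddCommGroup F] [Module K F]
  {l : K} {D U : Module.End K F} {v : F}

lemma apply_pow_apply_of_commutator_eq (h : D * U - U * D = -(l • U)) (hv : D v = 0) (m : ℕ) :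
    D ((U ^ m) v) = -((m : K) * l) • (U ^ m) v := by
  induction m with
  | zero => simp [hv]
  | succ m ih =>
    have hDU : D * U = U * D - l • U := by rw [sub_eq_iff_eq_add.mp h]; abel
    rw [pow_succ', Module.End.mul_apply, ← Module.End.mul_apply D, hDU]
    simp only [LinearMap.sub_apply, Module.End.mul_apply, LinearMap.smul_apply, ih, map_smul]
    push_cast
    module

lemma sub_add_smul_one_apply_pow_apply (h : D * U - U * D = -(l • U)) (hv : D v = 0)
    (j m : ℕ) :
    (D - U + ((j : K) * l) • 1) ((U ^ m) v) =
      (((j : K) - m) * l) • (U ^ m) v - (U ^ (m + 1)) v := by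
  simp only [LinearMap.add_apply, LinearMap.sub_apply, LinearMap.smul_apply, Module.End.one_apply,
    apply_pow_apply_of_commutator_eq h hv, pow_succ', Module.End.mul_apply]
  module

lemma shiftedProd_sub_apply_pow_apply (h : D * U - U * D = -(l • U)) (hv : D v = 0) (k m : ℕ) :
    shiftedProd l (D - U) k ((U ^ m) v) =
      ∑ j ∈ range (k + 1), shiftedProdCoeff l k m j • (U ^ (m + k - j)) v := by
  induction k generalizing m with
  | zero => simp [shiftedProd, shiftedProdCoeff]
  | succ k ih =>
    -- pad with the vanishing term `j = k + 1`, then split off `j = 0`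
    have hshift : ∑ j ∈ range (k + 1), shiftedProdCoeff l k (m + 1) j • (U ^ (m + 1 + k - j)) v =
        ∑ j ∈ range (k + 1), shiftedProdCoeff l k (m + 1) (j + 1) • (U ^ (m + k - j)) v +
          shiftedProdCoeff l k (m + 1) 0 • (U ^ (m + (k + 1))) v := by
      rw [← add_zero (∑ j ∈ range (k + 1), _), ← zero_smul K ((U ^ (m + 1 + k - (k + 1))) v),
        ← shiftedProdCoeff_of_lt l (m + 1) (Nat.lt_succ_self k), ← sum_range_succ,
        sum_range_succ', Nat.sub_zero, show m + 1 + k = m + (k + 1) by omega]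
      exact congrArg (· + _) (sum_congr rfl fun j _ => by
        rw [show m + (k + 1) - (j + 1) = m + k - j by omega])
    rw [shiftedProd_succ, Module.End.mul_apply, sub_add_smul_one_apply_pow_apply h hv, map_sub,
      map_smul, ih, ih, hshift, smul_sum, sum_range_succ' _ (k + 1), sub_add_eq_sub_sub,
      ← sum_sub_distrib, shiftedProdCoeff_succ_zero, neg_smul, sub_eq_add_neg, Nat.sub_zero]
    refine congrArg (· + _) (sum_congr rfl fun j hj => ?_)
    rw [shiftedProdCoeff_succ_succ l m (Nat.lt_succ_iff.mp (mem_range.mp hj)), sub_smul, smul_smul,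
      show m + (k + 1) - (j + 1) = m + k - j by omega]

end Operators

lemma binomB_apply_of_commutator_eq {K F : Type*} [Field K] [AddCommGroup F] [Module K F]
    {l : K} {D U : Module.End K F} {v : F} (h : D * U - U * D = -(l • U)) (hv : D v = 0)
    (n : ℕ) :
    binomB n l U D v = ∑ j ∈ range (n + 1),
      (((∑ k ∈ range (n + 1),
        (-1) ^ k * n.choose k * k.choose j * (n - k).descFactorial j : ℤ) : K) * l ^ j) •
          (U ^ (n - j)) v := by
  rw [binomB_eq_sum_shiftedProd, LinearMap.sum_apply]
  calc _ = ∑ k ∈ range (n + 1), ∑ j ∈ range (n + 1),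
        ((n.choose k : K) * shiftedProdCoeff l k (n - k) j) • (U ^ (n - j)) v := by
        refine sum_congr rfl fun k hk => ?_
        have hkn : k + 1 ≤ n + 1 := mem_range.mp hk
        rw [LinearMap.smul_apply, Module.End.mul_apply, shiftedProd_sub_apply_pow_apply h hv,
          smul_sum, ← sum_subset (range_subset_range.mpr hkn) fun j _ hj => by
            rw [shiftedProdCoeff_of_lt l _ (by simpa using hj), mul_zero, zero_smul]]
        refine sum_congr rfl fun j _ => ?_
        rw [← Nat.cast_smul_eq_nsmul K, smul_smul, show n - k + k - j = n - j by omega]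
    _ = _ := by
        rw [sum_comm]
        refine sum_congr rfl fun j _ => ?_
        rw [← sum_smul]
        push_cast
        simp only [shiftedProdCoeff, sum_mul]
        congr 1
        exact sum_congr rfl fun k _ => by ring

theorem binomB_annihilated_on_ker_general
    {K F : Type*} [Field K] [AddCommGroup F] [Module K F]
    (l : K) (D U : Module.End K F)
    (h : D * U - U * D = -(l • U))
    (n : ℕ) (v : F) (hv : D v = 0) :
    ((2 : K) • D + ((n : K) * l) • (1 : Module.End K F)) (binomB n l U D v) = 0 := by
  rw [binomB_apply_of_commutator_eq h hv, map_sum]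
  refine sum_eq_zero fun j hj => ?_
  have hjn : j ≤ n := Nat.lt_succ_iff.mp (mem_range.mp hj)
  have heigen : ((2 : K) • D + ((n : K) * l) • 1) ((U ^ (n - j)) v) =
      ((2 * j - n : ℤ) * l : K) • (U ^ (n - j)) v := by
    simp only [LinearMap.add_apply, LinearMap.smul_apply, Module.End.one_apply,
      apply_pow_apply_of_commutator_eq h hv]
    push_cast [Nat.cast_sub hjn]
    module
  rw [map_smul, heigen, smul_smul]
  by_cases hn : n = 2 * j
  · simp [hn]
  · simp [Int.alternating_sum_choose_mul_descFactorial_eq_zero hn]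

theorem binomB_annihilated_on_ker
    {K F : Type*} [Field K] [CharZero K] [AddCommGroup F] [Module K F]
    (l : K) (D U : Module.End K F)
    (h : D * U - U * D = -(l • U))
    (n : ℕ) (v : F) (hv : D v = 0) :
    ((2 : K) • D + ((n : K) * l) • (1 : Module.End K F)) (binomB n l U D v) = 0 :=
  binomB_annihilated_on_ker_general l D U h n v hv
end

section
/- Let D, U be linear operators on a vector space F over a field of characteristic zero with [D,[D,U]] = λ²U and [U,[D,U]] = 0, and F₀ = ker D. Then for every odd n and every v ∈ F₀, B(n,λ,U,D)v = 0. -/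
namespace BinomBAux

theorem natid (m j : ℕ) : (m - j) * m.choose j = m * (m - 1).choose j := by
  cases m with
  | zero => cases j <;> simp
  | succ m =>
    rw [mul_comm, ← Nat.choose_succ_right_eq, ← Nat.add_one_mul_choose_eq]
    simp

theorem natid2 (m j : ℕ) (hm : 1 ≤ m) : m.choose (j + 1) * (j + 1) = m * (m - 1).choose j := by
  obtain ⟨m', rfl⟩ : ∃ m', m = m' + 1 := ⟨m - 1, by omega⟩
  rw [← Nat.add_one_mul_choose_eq]
  simp

variable {K F : Type*} [Field K] [AddCommGroup F] [Module K F]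

theorem pascal_sum (n : ℕ) (f : ℕ → F) :
    ∑ k ∈ Finset.range (n + 2), (((n + 1).choose k : ℕ) : K) • f k
      = (∑ k ∈ Finset.range (n + 1), ((n.choose k : ℕ) : K) • f k)
        + ∑ k ∈ Finset.range (n + 1), ((n.choose k : ℕ) : K) • f (k + 1) := by
  have e0 : ∑ k ∈ Finset.range (n + 2), ((n.choose k : ℕ) : K) • f k
      = (∑ k ∈ Finset.range (n + 1), ((n.choose (k + 1) : ℕ) : K) • f (k + 1))
        + ((n.choose 0 : ℕ) : K) • f 0 :=
    Finset.sum_range_succ' (fun k => ((n.choose k : ℕ) : K) • f k) (n + 1)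
  have e1 : ∑ k ∈ Finset.range (n + 1), ((n.choose k : ℕ) : K) • f k
      = (∑ k ∈ Finset.range (n + 1), ((n.choose (k + 1) : ℕ) : K) • f (k + 1))
        + ((n.choose 0 : ℕ) : K) • f 0 := by
    rw [← e0, Finset.sum_range_succ (fun k => ((n.choose k : ℕ) : K) • f k) (n + 1)]
    simp [Nat.choose_succ_self]
  rw [Finset.sum_range_succ' (fun k => (((n + 1).choose k : ℕ) : K) • f k) (n + 1)]
  simp only [Nat.choose_succ_succ, Nat.cast_add, add_smul, Finset.sum_add_distrib]
  rw [e1]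
  simp only [Nat.choose_zero_right, Nat.cast_one, one_smul]
  abel

/-- The product `(D-U)(D-U+l)⋯(D-U+(k-1)l)`. -/
noncomputable def Gop (l : K) (D U : Module.End K F) (k : ℕ) : Module.End K F :=
  ((List.range k).map (fun j : ℕ => D - U + ((j : K) * l) • (1 : Module.End K F))).prod

theorem Gop_zero (l : K) (D U : Module.End K F) : Gop l D U 0 = 1 := rfl

theorem Gop_succ (l : K) (D U : Module.End K F) (k : ℕ) :
    Gop l D U (k + 1) = Gop l D U k * (D - U + ((k : K) * l) • 1) := by
  simp [Gop, List.range_succ]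

theorem Gop_comm (l : K) (D U : Module.End K F) (k : ℕ) (a : K) :
    Gop l D U k * (D - U + a • 1) = (D - U + a • 1) * Gop l D U k := by
  induction k with
  | zero => simp [Gop_zero]
  | succ k ih =>
      rw [Gop_succ, mul_assoc]
      have : (D - U + ((k : K) * l) • 1) * (D - U + a • 1)
          = (D - U + a • 1) * (D - U + ((k : K) * l) • 1) := by
        simp only [mul_add, add_mul, smul_mul_assoc, mul_smul_comm, one_mul, mul_one]
        module
      rw [this, ← mul_assoc, ih, mul_assoc]

theorem UM_comm (l : K) (D U : Module.End K F)
    (hU : U * (D * U - U * D) - (D * U - U * D) * U = 0) :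
    U * ((D * U - U * D) - l • U) = ((D * U - U * D) - l • U) * U := by
  have h : U * (D * U - U * D) = (D * U - U * D) * U := by
    rw [← sub_eq_zero]; exact hU
  simp only [mul_sub, sub_mul, smul_mul_assoc, mul_smul_comm, h]

theorem VM_comm (l : K) (D U : Module.End K F)
    (h2 : D * (D * U - U * D) - (D * U - U * D) * D = (l ^ 2) • U)
    (hU : U * (D * U - U * D) - (D * U - U * D) * U = 0) :
    (D - U) * ((D * U - U * D) - l • U)
      = ((D * U - U * D) - l • U) * (D - U) - l • ((D * U - U * D) - l • U) := by
  have e1 : (D - U) * ((D * U - U * D) - l • U)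
      - (((D * U - U * D) - l • U) * (D - U) - l • ((D * U - U * D) - l • U))
      = (D * (D * U - U * D) - (D * U - U * D) * D - (l ^ 2) • U)
        - (U * (D * U - U * D) - (D * U - U * D) * U) := by
    simp only [mul_sub, sub_mul, smul_mul_assoc, mul_smul_comm, smul_sub, smul_smul, sq,
      mul_assoc]
    module
  rw [h2, hU, sub_zero, sub_self] at e1
  exact sub_eq_zero.mp e1

theorem VU_pow (D U : Module.End K F)
    (hU : U * (D * U - U * D) - (D * U - U * D) * U = 0) (m : ℕ) :
    (D - U) * U ^ (m + 1)
      = U ^ (m + 1) * (D - U) + ((m : K) + 1) • (U ^ m * (D * U - U * D)) := by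
  have hUC : U * (D * U - U * D) = (D * U - U * D) * U := by
    rw [← sub_eq_zero]; exact hU
  induction m with
  | zero =>
      simp only [pow_one, pow_zero, one_mul, Nat.cast_zero, zero_add, one_smul]
      noncomm_ring
  | succ m ih =>
      have h0 : (D - U) * U ^ (m + 2) = ((D - U) * U ^ (m + 1)) * U := by
        rw [mul_assoc, ← pow_succ]
      rw [h0, ih]
      have h1 : U ^ (m + 1) * ((D - U) * U)
          = U ^ (m + 2) * (D - U) + U ^ (m + 1) * (D * U - U * D) := by
        have : (D - U) * U = U * (D - U) + (D * U - U * D) := by noncomm_ring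
        rw [this, mul_add, ← mul_assoc, ← pow_succ]
      have h2' : U ^ m * ((D * U - U * D) * U) = U ^ (m + 1) * (D * U - U * D) := by
        rw [← hUC, ← mul_assoc, ← pow_succ]
      simp only [add_mul, smul_mul_assoc, mul_assoc] at *
      rw [h1, h2']
      push_cast
      module

theorem Gop_M (l : K) (D U M : Module.End K F)
    (hVM : (D - U) * M = M * (D - U) - l • M) (k : ℕ) :
    Gop l D U (k + 1) * M
      = M * Gop l D U (k + 1) - (((k : K) + 1) * l) • (M * Gop l D U k) := by
  induction k with
  | zero =>
      simp only [Gop_succ, Gop_zero, Nat.cast_zero, zero_mul, zero_smul, add_zero, one_mul,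
        mul_one, zero_add, one_smul]
      linear_combination (norm := module) hVM
  | succ k ih =>
      push_cast
      have hstep : (D - U + (((k : K) + 1) * l) • 1) * M
          = M * (D - U + (((k : K) + 1) * l) • 1) - l • M := by
        simp only [add_mul, mul_add, smul_mul_assoc, mul_smul_comm, one_mul, mul_one, hVM]
        module
      have expand : Gop l D U (k + 1) * (D - U + (((k : K) + 1) * l) • 1)
          = Gop l D U (k + 2) := by
        rw [Gop_succ l D U (k + 1)]; push_cast; ring_nf
      have expand2 : Gop l D U k * (D - U + (((k : K) + 1) * l) • 1)
          = Gop l D U (k + 1) + l • Gop l D U k := by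
        have : (D - U + (((k : K) + 1) * l) • 1)
            = (D - U + ((k : K) * l) • 1) + l • 1 := by
          rw [add_assoc, ← add_smul]; ring_nf
        rw [this, mul_add, ← Gop_succ, mul_smul_comm, mul_one]
      calc Gop l D U (k + 2) * M
          = Gop l D U (k + 1) * ((D - U + (((k : K) + 1) * l) • 1) * M) := by
            rw [← mul_assoc, ← expand]
        _ = Gop l D U (k + 1) * (M * (D - U + (((k : K) + 1) * l) • 1) - l • M) := by
            rw [hstep]
        _ = (Gop l D U (k + 1) * M) * (D - U + (((k : K) + 1) * l) • 1)
            - l • (Gop l D U (k + 1) * M) := by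
            rw [mul_sub, mul_smul_comm, mul_assoc]
        _ = (M * Gop l D U (k + 1) - (((k : K) + 1) * l) • (M * Gop l D U k))
              * (D - U + (((k : K) + 1) * l) • 1)
            - l • (M * Gop l D U (k + 1) - (((k : K) + 1) * l) • (M * Gop l D U k)) := by
            rw [ih]
        _ = M * (Gop l D U (k + 1) * (D - U + (((k : K) + 1) * l) • 1))
            - (((k : K) + 1) * l) • (M * (Gop l D U k * (D - U + (((k : K) + 1) * l) • 1)))
            - l • (M * Gop l D U (k + 1))
            + ((((k : K) + 1) * l) * l) • (M * Gop l D U k) := by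
            simp only [sub_mul, smul_mul_assoc, mul_assoc, smul_sub, smul_smul]
            module
        _ = M * Gop l D U (k + 2) - (((k : K) + 1 + 1) * l) • (M * Gop l D U (k + 1)) := by
            rw [expand, expand2]
            simp only [mul_add, smul_add, mul_smul_comm, smul_smul]
            module

/-- `G k (U^m v)`. -/
noncomputable def wv (l : K) (D U : Module.End K F) (v : F) (k m : ℕ) : F :=
  Gop l D U k ((U ^ m) v)

/-- `B(n) v`. -/
noncomputable def bv (l : K) (D U : Module.End K F) (v : F) (n : ℕ) : F :=
  ∑ k ∈ Finset.range (n + 1), ((n.choose k : ℕ) : K) • wv l D U v k (n - k)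

section Vector

variable {K F : Type*} [Field K] [AddCommGroup F] [Module K F]
variable (l : K) (D U : Module.End K F) (v : F)

theorem pow_M_apply (hU : U * (D * U - U * D) - (D * U - U * D) * U = 0)
    (m : ℕ) (x : F) :
    (U ^ m) (((D * U - U * D) - l • U) x) = ((D * U - U * D) - l • U) ((U ^ m) x) := by
  have hc : U ^ m * ((D * U - U * D) - l • U) = ((D * U - U * D) - l • U) * U ^ m :=
    (Commute.pow_left (UM_comm l D U hU) m)
  rw [← Module.End.mul_apply, hc, Module.End.mul_apply]

theorem C_apply_v : (D * U - U * D) v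
    = ((D * U - U * D) - l • U) v + l • (U v) := by
  simp only [LinearMap.sub_apply, LinearMap.smul_apply]
  abel

theorem V_pow_apply (hU : U * (D * U - U * D) - (D * U - U * D) * U = 0)
    (hv : D v = 0) (m : ℕ) :
    (D - U) ((U ^ m) v)
      = -((U ^ (m + 1)) v) + ((m : ℕ) : K) • ((U ^ (m - 1)) ((D * U - U * D) v)) := by
  have hVv : (D - U) v = -(U v) := by
    rw [LinearMap.sub_apply, hv, zero_sub]
  cases m with
  | zero => simpa using hVv
  | succ m =>
      have h := congrArg (fun T : Module.End K F => T v) (VU_pow D U hU m)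
      simp only [Module.End.mul_apply, LinearMap.add_apply, LinearMap.smul_apply] at h
      rw [h, hVv, map_neg]
      have : (U ^ (m + 1)) (U v) = (U ^ (m + 1 + 1)) v := by
        rw [← Module.End.mul_apply, ← pow_succ]
      rw [this]
      push_cast
      simp only [Nat.add_sub_cancel]

theorem wv_succ (hU : U * (D * U - U * D) - (D * U - U * D) * U = 0)
    (hv : D v = 0) (k m : ℕ) :
    wv l D U v (k + 1) m
      = -(wv l D U v k (m + 1))
        + ((m : ℕ) : K) • (Gop l D U k ((U ^ (m - 1)) ((D * U - U * D) v)))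
        + ((k : K) * l) • wv l D U v k m := by
  show Gop l D U (k + 1) ((U ^ m) v) = _
  rw [Gop_succ, Module.End.mul_apply, LinearMap.add_apply, LinearMap.smul_apply,
    Module.End.one_apply, V_pow_apply D U v hU hv m, map_add, map_add, map_neg, map_smul,
    map_smul]
  rfl

end Vector


section Key

variable {K F : Type*} [Field K] [AddCommGroup F] [Module K F]

theorem wv_def (l : K) (D U : Module.End K F) (v : F) (k m : ℕ) :
    wv l D U v k m = Gop l D U k ((U ^ m) v) := rfl

theorem key (l : K) (D U : Module.End K F)
    (h2 : D * (D * U - U * D) - (D * U - U * D) * D = (l ^ 2) • U)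
    (hU : U * (D * U - U * D) - (D * U - U * D) * U = 0)
    (v : F) (hv : D v = 0) (p : ℕ) :
    bv l D U v (p + 2)
      = (((p + 1 : ℕ) : K) * l) • bv l D U v (p + 1)
        + ((p + 1 : ℕ) : K) • (((D * U - U * D) - l • U) (bv l D U v p))
        - (((p + 1 : ℕ) : K) * ((p : ℕ) : K) * l) •
            (((D * U - U * D) - l • U) (bv l D U v (p - 1))) := by
  set M : Module.End K F := (D * U - U * D) - l • U with hM
  have hVM := VM_comm l D U h2 hU
  have hw := wv_succ l D U v hU hv
  have stepA : bv l D U v (p + 2)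
      = (∑ k ∈ Finset.range (p + 2), (((p + 1).choose k : ℕ) : K) • wv l D U v k (p + 2 - k))
        + ∑ k ∈ Finset.range (p + 2),
            (((p + 1).choose k : ℕ) : K) • wv l D U v (k + 1) (p + 2 - (k + 1)) :=
    pascal_sum (p + 1) (fun k => wv l D U v k (p + 2 - k))
  have stepB : ∑ k ∈ Finset.range (p + 2),
        (((p + 1).choose k : ℕ) : K) • wv l D U v (k + 1) (p + 2 - (k + 1))
      = -(∑ k ∈ Finset.range (p + 2), (((p + 1).choose k : ℕ) : K) • wv l D U v k (p + 2 - k))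
        + (∑ k ∈ Finset.range (p + 2), (((p + 1).choose k * (p + 1 - k) : ℕ) : K) •
            (Gop l D U k ((U ^ (p - k)) ((D * U - U * D) v))))
        + ∑ k ∈ Finset.range (p + 2),
            ((((p + 1).choose k * k : ℕ) : K) * l) • wv l D U v k (p + 1 - k) := by
    rw [← Finset.sum_neg_distrib, ← Finset.sum_add_distrib, ← Finset.sum_add_distrib]
    refine Finset.sum_congr rfl fun k hk => ?_
    have hk2 : k ≤ p + 1 := by have := Finset.mem_range.mp hk; omega
    rw [show p + 2 - (k + 1) = p + 1 - k from by omega]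
    rw [hw k (p + 1 - k)]
    rw [show p + 1 - k + 1 = p + 2 - k from by omega,
        show p + 1 - k - 1 = p - k from by omega]
    simp only [Nat.cast_mul, smul_add, smul_neg, smul_smul]
    module
  have stepC : bv l D U v (p + 2)
      = (∑ k ∈ Finset.range (p + 2), (((p + 1).choose k * (p + 1 - k) : ℕ) : K) •
            (Gop l D U k ((U ^ (p - k)) ((D * U - U * D) v))))
        + ∑ k ∈ Finset.range (p + 2),
            ((((p + 1).choose k * k : ℕ) : K) * l) • wv l D U v k (p + 1 - k) := by
    rw [stepA, stepB]; abel
  have stepD : (∑ k ∈ Finset.range (p + 2), (((p + 1).choose k * (p + 1 - k) : ℕ) : K) •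
            (Gop l D U k ((U ^ (p - k)) ((D * U - U * D) v))))
      = (∑ k ∈ Finset.range (p + 1), (((p + 1).choose k * (p + 1 - k) : ℕ) : K) •
            (Gop l D U k (M ((U ^ (p - k)) v))))
        + ∑ k ∈ Finset.range (p + 1), ((((p + 1).choose k * (p + 1 - k) : ℕ) : K) * l) •
            wv l D U v k (p + 1 - k) := by
    rw [Finset.sum_range_succ]
    rw [show (p + 1).choose (p + 1) * (p + 1 - (p + 1)) = 0 from by simp]
    rw [Nat.cast_zero, zero_smul, add_zero, ← Finset.sum_add_distrib]
    refine Finset.sum_congr rfl fun k hk => ?_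
    have hkp : k ≤ p := by have := Finset.mem_range.mp hk; omega
    rw [C_apply_v l D U v, map_add, map_smul, pow_M_apply l D U hU (p - k) v]
    rw [show ((U ^ (p - k)) (U v)) = (U ^ (p + 1 - k)) v from by
      rw [← Module.End.mul_apply, ← pow_succ, show p - k + 1 = p + 1 - k from by omega]]
    rw [map_add, map_smul, ← hM, ← wv_def]
    rw [smul_add, smul_smul]
  have stepE : (∑ k ∈ Finset.range (p + 2),
          ((((p + 1).choose k * k : ℕ) : K) * l) • wv l D U v k (p + 1 - k))
        + (∑ k ∈ Finset.range (p + 1), ((((p + 1).choose k * (p + 1 - k) : ℕ) : K) * l) •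
            wv l D U v k (p + 1 - k))
      = (((p + 1 : ℕ) : K) * l) • bv l D U v (p + 1) := by
    have ext2 : (∑ k ∈ Finset.range (p + 2), ((((p + 1).choose k * (p + 1 - k) : ℕ) : K) * l) •
            wv l D U v k (p + 1 - k))
        = ∑ k ∈ Finset.range (p + 1), ((((p + 1).choose k * (p + 1 - k) : ℕ) : K) * l) •
            wv l D U v k (p + 1 - k) := by
      rw [Finset.sum_range_succ, show (p + 1).choose (p + 1) * (p + 1 - (p + 1)) = 0 from by simp]
      simp
    rw [← ext2, ← Finset.sum_add_distrib]
    have hbv : bv l D U v (p + 1)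
        = ∑ k ∈ Finset.range (p + 2), (((p + 1).choose k : ℕ) : K) • wv l D U v k (p + 1 - k) :=
      rfl
    rw [hbv, Finset.smul_sum]
    refine Finset.sum_congr rfl fun k hk => ?_
    have hk2 : k ≤ p + 1 := by have := Finset.mem_range.mp hk; omega
    rw [smul_smul, ← add_smul]
    congr 1
    rw [← add_mul, ← Nat.cast_add, ← Nat.mul_add,
      show k + (p + 1 - k) = p + 1 from by omega, Nat.cast_mul]
    ring
  have hGMapp : ∀ (k : ℕ) (x : F), Gop l D U (k + 1) (M x)
      = M (Gop l D U (k + 1) x) - (((k : K) + 1) * l) • M (Gop l D U k x) := by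
    intro k x
    have h := congrArg (fun T : Module.End K F => T x) (Gop_M l D U M hVM k)
    simpa only [Module.End.mul_apply, LinearMap.sub_apply, LinearMap.smul_apply] using h
  have stepF1 : (∑ k ∈ Finset.range (p + 1), (((p + 1).choose k * (p + 1 - k) : ℕ) : K) •
            (Gop l D U k (M ((U ^ (p - k)) v))))
      = ((∑ k ∈ Finset.range p, (((p + 1).choose (k + 1) * (p + 1 - (k + 1)) : ℕ) : K) •
            M (wv l D U v (k + 1) (p - (k + 1))))
          + ((p + 1 : ℕ) : K) • M (wv l D U v 0 p))
        - ∑ k ∈ Finset.range p,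
            ((((p + 1).choose (k + 1) * (p + 1 - (k + 1)) : ℕ) : K) * (((k : K) + 1) * l)) •
              M (wv l D U v k (p - 1 - k)) := by
    rw [Finset.sum_range_succ']
    have h0 : (((p + 1).choose 0 * (p + 1 - 0) : ℕ) : K) • Gop l D U 0 (M ((U ^ (p - 0)) v))
        = ((p + 1 : ℕ) : K) • M (wv l D U v 0 p) := by
      simp [Gop_zero, wv_def]
    rw [h0]
    rw [show (∑ k ∈ Finset.range p, (((p + 1).choose (k + 1) * (p + 1 - (k + 1)) : ℕ) : K) •
            (Gop l D U (k + 1) (M ((U ^ (p - (k + 1))) v))))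
        = (∑ k ∈ Finset.range p, ((((p + 1).choose (k + 1) * (p + 1 - (k + 1)) : ℕ) : K) •
              M (wv l D U v (k + 1) (p - (k + 1)))
            - ((((p + 1).choose (k + 1) * (p + 1 - (k + 1)) : ℕ) : K) * (((k : K) + 1) * l)) •
              M (wv l D U v k (p - 1 - k)))) from ?_]
    · rw [Finset.sum_sub_distrib]
      abel
    · refine Finset.sum_congr rfl fun k hk => ?_
      have hkp : k < p := Finset.mem_range.mp hk
      rw [hGMapp k ((U ^ (p - (k + 1))) v), ← wv_def, ← wv_def,
        show p - (k + 1) = p - 1 - k from by omega]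
      rw [smul_sub, smul_smul]
  have stepF2 : ((∑ k ∈ Finset.range p, (((p + 1).choose (k + 1) * (p + 1 - (k + 1)) : ℕ) : K) •
            M (wv l D U v (k + 1) (p - (k + 1))))
          + ((p + 1 : ℕ) : K) • M (wv l D U v 0 p))
      = ((p + 1 : ℕ) : K) • M (bv l D U v p) := by
    have hbv : bv l D U v p
        = ∑ k ∈ Finset.range (p + 1), ((p.choose k : ℕ) : K) • wv l D U v k (p - k) := rfl
    rw [hbv, map_sum, Finset.smul_sum, Finset.sum_range_succ']
    simp only [map_smul, smul_smul]
    congr 1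
    · refine Finset.sum_congr rfl fun k hk => ?_
      congr 1
      rw [← Nat.cast_mul, mul_comm ((p + 1).choose (k + 1)),
        natid (p + 1) (k + 1), Nat.add_sub_cancel]
    · simp
  have stepF3 : (∑ k ∈ Finset.range p,
          ((((p + 1).choose (k + 1) * (p + 1 - (k + 1)) : ℕ) : K) * (((k : K) + 1) * l)) •
            M (wv l D U v k (p - 1 - k)))
      = (((p + 1 : ℕ) : K) * ((p : ℕ) : K) * l) • M (bv l D U v (p - 1)) := by
    rcases Nat.eq_zero_or_pos p with hp | hp
    · subst hp; simp
    obtain ⟨q, rfl⟩ : ∃ q, p = q + 1 := ⟨p - 1, by omega⟩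
    have hbv : bv l D U v q
        = ∑ k ∈ Finset.range (q + 1), ((q.choose k : ℕ) : K) • wv l D U v k (q - k) := rfl
    rw [show q + 1 - 1 = q from rfl, hbv, map_sum, Finset.smul_sum]
    refine Finset.sum_congr rfl fun k hk => ?_
    have hkq : k ≤ q := by have := Finset.mem_range.mp hk; omega
    simp only [map_smul, smul_smul]
    congr 1
    have hc : (q + 1 + 1).choose (k + 1) * (q + 1 + 1 - (k + 1)) * (k + 1)
        = (q + 1 + 1) * ((q + 1) * q.choose k) := by
      have e1 : (q + 2).choose (k + 1) * (k + 1) = (q + 2) * (q + 1).choose k := by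
        have := natid2 (q + 2) k (by omega)
        simpa using this
      have e2 : (q + 1 - k) * (q + 1).choose k = (q + 1) * q.choose k := by
        have := natid (q + 1) k
        simpa using this
      calc (q + 1 + 1).choose (k + 1) * (q + 1 + 1 - (k + 1)) * (k + 1)
          = ((q + 2).choose (k + 1) * (k + 1)) * (q + 1 - k) := by
            rw [show q + 1 + 1 - (k + 1) = q + 1 - k from by omega]; ring_nf
        _ = (q + 2) * ((q + 1 - k) * (q + 1).choose k) := by rw [e1]; ring
        _ = (q + 1 + 1) * ((q + 1) * q.choose k) := by rw [e2]
    calc (((q + 1 + 1).choose (k + 1) * (q + 1 + 1 - (k + 1)) : ℕ) : K) * (((k : K) + 1) * l)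
        = (((q + 1 + 1).choose (k + 1) * (q + 1 + 1 - (k + 1)) * (k + 1) : ℕ) : K) * l := by
          rw [Nat.cast_mul ((q + 1 + 1).choose (k + 1) * (q + 1 + 1 - (k + 1))) (k + 1),
            Nat.cast_add_one]
          ring
      _ = (((q + 1 + 1) * ((q + 1) * q.choose k) : ℕ) : K) * l := by rw [hc]
      _ = ((q + 1 + 1 : ℕ) : K) * ((q + 1 : ℕ) : K) * l * ((q.choose k : ℕ) : K) := by
          rw [Nat.cast_mul, Nat.cast_mul]; ring
  have hS1a : (∑ k ∈ Finset.range (p + 1), (((p + 1).choose k * (p + 1 - k) : ℕ) : K) •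
            (Gop l D U k (M ((U ^ (p - k)) v))))
      = ((p + 1 : ℕ) : K) • M (bv l D U v p)
        - (((p + 1 : ℕ) : K) * ((p : ℕ) : K) * l) • M (bv l D U v (p - 1)) := by
    rw [stepF1, stepF2, stepF3]
  rw [stepC, stepD, hS1a, ← stepE]
  abel

end Key


section Final

variable {K F : Type*} [Field K] [AddCommGroup F] [Module K F]

theorem bv_one (l : K) (D U : Module.End K F) (v : F) (hv : D v = 0) :
    bv l D U v 1 = 0 := by
  have h1 : Gop l D U 1 = D - U := by
    rw [Gop_succ, Gop_zero]; simp
  have : bv l D U v 1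
      = ((Nat.choose 1 0 : ℕ) : K) • wv l D U v 0 (1 - 0)
        + ((Nat.choose 1 1 : ℕ) : K) • wv l D U v 1 (1 - 1) := by
    show ∑ k ∈ Finset.range 2, ((Nat.choose 1 k : ℕ) : K) • wv l D U v k (1 - k) = _
    rw [Finset.sum_range_succ, Finset.sum_range_one]
  rw [this]
  simp only [wv_def, h1, Gop_zero, Nat.choose_self, Nat.choose_zero_right, Nat.cast_one,
    one_smul, pow_one, pow_zero, Module.End.one_apply, LinearMap.sub_apply, hv, Nat.sub_self,
    Nat.sub_zero]
  abel

theorem bv_odd_even (l : K) (D U : Module.End K F)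
    (h2 : D * (D * U - U * D) - (D * U - U * D) * D = (l ^ 2) • U)
    (hU : U * (D * U - U * D) - (D * U - U * D) * U = 0)
    (v : F) (hv : D v = 0) (m : ℕ) :
    bv l D U v (2 * m + 1) = 0
      ∧ bv l D U v (2 * m + 2)
          = ((2 * m + 1 : ℕ) : K) • (((D * U - U * D) - l • U) (bv l D U v (2 * m))) := by
  induction m with
  | zero =>
      refine ⟨by simpa using bv_one l D U v hv, ?_⟩
      have h := key l D U h2 hU v hv 0
      simp only [Nat.cast_zero, Nat.cast_one, zero_mul, mul_zero, zero_smul, sub_zero,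
        Nat.zero_sub] at h ⊢
      rw [h, show (0 + 1 : ℕ) = 1 from rfl, bv_one l D U v hv]
      simp
  | succ m ih =>
      obtain ⟨ih1, ih2⟩ := ih
      have hodd : bv l D U v (2 * (m + 1) + 1) = 0 := by
        have h := key l D U h2 hU v hv (2 * m + 1)
        rw [show 2 * m + 1 + 2 = 2 * (m + 1) + 1 from by ring,
          show 2 * m + 1 + 1 = 2 * m + 2 from by ring,
          show 2 * m + 1 - 1 = 2 * m from by omega] at h
        rw [h, ih1, ih2]
        simp only [map_zero, smul_zero, smul_smul, add_zero]
        rw [← sub_smul]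
        convert zero_smul K _ using 2
        ring
      refine ⟨hodd, ?_⟩
      have h := key l D U h2 hU v hv (2 * m + 2)
      rw [show 2 * m + 2 + 2 = 2 * (m + 1) + 2 from by ring,
        show 2 * m + 2 + 1 = 2 * (m + 1) + 1 from by ring,
        show 2 * m + 2 - 1 = 2 * m + 1 from by omega] at h
      rw [h, hodd, ih1]
      simp only [map_zero, smul_zero, sub_zero, add_zero, zero_add]
      rw [show 2 * (m + 1) = 2 * m + 2 from by ring]

theorem binomB_eq_s12 (n : ℕ) (l : K) (D U : Module.End K F) (v : F) :
    binomB n l U D v = bv l D U v n := by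
  show (∑ k ∈ Finset.range (n + 1), n.choose k •
      (((List.range k).map
          (fun j : ℕ => D - U + ((j : K) * l) • (1 : Module.End K F))).prod * U ^ (n - k))) v
    = _
  rw [LinearMap.sum_apply]
  refine Finset.sum_congr rfl fun k hk => ?_
  rw [LinearMap.smul_apply, Module.End.mul_apply, ← Nat.cast_smul_eq_nsmul K]
  rfl

end Final

end BinomBAux

theorem binomB_odd_vanishes_on_ker_second_commutator
    {K F : Type*} [Field K] [CharZero K] [AddCommGroup F] [Module K F]
    (l : K) (D U : Module.End K F)
    (h2 : D * (D * U - U * D) - (D * U - U * D) * D = (l ^ 2) • U)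
    (hU : U * (D * U - U * D) - (D * U - U * D) * U = 0)
    (n : ℕ) (hn : Odd n) (v : F) (hv : D v = 0) :
    binomB n l U D v = 0 := by
  obtain ⟨m, rfl⟩ := hn
  rw [BinomBAux.binomB_eq_s12]
  exact (BinomBAux.bv_odd_even l D U h2 hU v hv m).1
end

section
/- Let D, U, V be linear operators on a vector space F over a field of characteristic zero with [D,U] = V, [U,V] = 0, [D,V] = 0, and let F₀ = ker D. Then for all n > 2 and v ∈ F₀, B(n,0,U,D)v = (n-1) V B(n-2,0,U,D) v, where B(n,0,U,D) = Σ_{k=0}^{n} C(n,k) (D-U)^k U^{n-k}. -/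
open Finset

section aux

variable {R : Type*} [Ring R]

private def binS (X Y : R) (n : ℕ) : R :=
  ∑ k ∈ Finset.range (n + 1), n.choose k • (X ^ k * Y ^ (n - k))

private lemma comm_pow_succ {X Y V : R} (hXY : X * Y = Y * X + V) (hVY : V * Y = Y * V) :
    ∀ j : ℕ, X * Y ^ (j + 1) = Y ^ (j + 1) * X + (j + 1) • (V * Y ^ j) := by
  have hcVY : Commute V Y := hVY
  intro j
  induction j with
  | zero => simpa using hXY
  | succ j ih =>
    have hV : V * Y ^ (j + 1) = Y ^ (j + 1) * V := (hcVY.pow_right (j + 1)).eq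
    calc X * Y ^ (j + 2) = (X * Y ^ (j + 1)) * Y := by rw [pow_succ, mul_assoc]
      _ = (Y ^ (j + 1) * X + (j + 1) • (V * Y ^ j)) * Y := by rw [ih]
      _ = Y ^ (j + 1) * (X * Y) + (j + 1) • (V * Y ^ (j + 1)) := by
          rw [add_mul, smul_mul_assoc, mul_assoc, mul_assoc, ← pow_succ]
      _ = Y ^ (j + 2) * X + (j + 2) • (V * Y ^ (j + 1)) := by
          rw [hXY, mul_add, ← mul_assoc, ← pow_succ, ← hV]
          module

private lemma comm_pow {X Y V : R} (hXY : X * Y = Y * X + V) (hVY : V * Y = Y * V) (i : ℕ) :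
    X * Y ^ i = Y ^ i * X + i • (V * Y ^ (i - 1)) := by
  cases i with
  | zero => simp
  | succ j => simpa using comm_pow_succ hXY hVY j

private lemma binS_succ (X Y : R) (m : ℕ) :
    binS X Y (m + 1) = X * binS X Y m + binS X Y m * Y := by
  have h1 : binS X Y m * Y = ∑ k ∈ range (m + 1), m.choose k • (X ^ k * Y ^ (m + 1 - k)) := by
    rw [binS, Finset.sum_mul]
    refine Finset.sum_congr rfl fun k hk => ?_
    rw [Finset.mem_range] at hk
    rw [smul_mul_assoc, mul_assoc, ← pow_succ, show m - k + 1 = m + 1 - k from by omega]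
  have h2 : X * binS X Y m = ∑ k ∈ range (m + 1), m.choose k • (X ^ (k + 1) * Y ^ (m - k)) := by
    rw [binS, Finset.mul_sum]
    refine Finset.sum_congr rfl fun k hk => ?_
    rw [mul_smul_comm, ← mul_assoc, ← pow_succ']
  rw [h1, h2, binS, Finset.sum_range_succ']
  simp only [Nat.succ_sub_succ, Nat.choose_succ_succ, add_smul, Finset.sum_add_distrib,
    Nat.choose_zero_right, Nat.sub_zero, one_smul, pow_zero, one_mul]
  rw [Finset.sum_range_succ']
  simp only [Nat.succ_sub_succ, Nat.choose_zero_right, one_smul, pow_zero, one_mul]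
  rw [Finset.sum_range_succ (fun i => m.choose (i + 1) • (X ^ (i + 1) * Y ^ (m - i)))]
  simp [Nat.choose_succ_self]
  rw [Finset.sum_range_succ' (fun x => (m.choose x : R) * (X ^ x * Y ^ (m + 1 - x)))]
  simp [Nat.succ_sub_succ]
  abel

private lemma nat_coeff (m k : ℕ) (hk : k ≤ m + 1) :
    (m + 1).choose k * (m + 1 - k) = (m + 1) * m.choose k := by
  rcases Nat.lt_or_ge k (m + 1) with h | h
  · have hkm : k ≤ m := by omega
    have e1 : (m + 1).choose k = (m + 1).choose (m + 1 - k) := (Nat.choose_symm hk).symm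
    have e2 : m + 1 - k = (m - k) + 1 := by omega
    rw [e1, e2, ← Nat.add_one_mul_choose_eq, Nat.choose_symm hkm]
  · have : k = m + 1 := by omega
    subst this
    simp

private lemma X_mul_binS {X Y V : R} (hXY : X * Y = Y * X + V) (hVY : V * Y = Y * V)
    (hVX : V * X = X * V) (m : ℕ) :
    X * binS X Y (m + 1) = binS X Y (m + 1) * X + (m + 1) • (V * binS X Y m) := by
  have hcVX : Commute V X := hVX
  have hVXk : ∀ k : ℕ, X ^ k * V = V * X ^ k := fun k => (hcVX.pow_right k).eq.symm
  have step1 : X * binS X Y (m + 1)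
      = ∑ k ∈ range (m + 2), (m + 1).choose k •
          (X ^ k * (Y ^ (m + 1 - k) * X + (m + 1 - k) • (V * Y ^ (m - k)))) := by
    rw [binS, Finset.mul_sum]
    refine Finset.sum_congr rfl fun k _ => ?_
    rw [mul_smul_comm, ← mul_assoc, ← pow_succ', pow_succ, mul_assoc,
      comm_pow hXY hVY (m + 1 - k), show m + 1 - k - 1 = m - k by omega]
  rw [step1]
  have step2 : ∀ k ∈ range (m + 2), (m + 1).choose k •
      (X ^ k * (Y ^ (m + 1 - k) * X + (m + 1 - k) • (V * Y ^ (m - k))))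
      = ((m + 1).choose k • (X ^ k * Y ^ (m + 1 - k))) * X
        + ((m + 1) * m.choose k) • (V * (X ^ k * Y ^ (m - k))) := by
    intro k hk
    rw [Finset.mem_range] at hk
    rw [mul_add, smul_add, smul_mul_assoc, mul_assoc]
    congr 1
    rw [mul_smul_comm, smul_smul, nat_coeff m k (by omega)]
    congr 1
    rw [← mul_assoc, hVXk, mul_assoc]
  rw [Finset.sum_congr rfl step2, Finset.sum_add_distrib, ← Finset.sum_mul,
    show (∑ k ∈ range (m + 2), (m + 1).choose k • (X ^ k * Y ^ (m + 1 - k))) * X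
      = binS X Y (m + 1) * X from rfl]
  congr 1
  rw [Finset.sum_range_succ]
  simp only [Nat.choose_succ_self, Nat.mul_zero, zero_smul, add_zero]
  rw [binS, Finset.mul_sum, Finset.smul_sum]
  refine Finset.sum_congr rfl fun k _ => ?_
  rw [mul_smul, mul_smul_comm]

private lemma binS_rec {X Y V : R} (hXY : X * Y = Y * X + V) (hVY : V * Y = Y * V)
    (hVX : V * X = X * V) (m : ℕ) :
    binS X Y (m + 2) = binS X Y (m + 1) * (X + Y) + (m + 1) • (V * binS X Y m) := by
  rw [binS_succ X Y (m + 1), X_mul_binS hXY hVY hVX m, mul_add]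
  abel

end aux

theorem binomB_zero_lambda_recurrence_on_ker
    {K F : Type*} [Field K] [CharZero K] [AddCommGroup F] [Module K F]
    (D U V : Module.End K F)
    (hDU : D * U - U * D = V) (hUV : U * V - V * U = 0) (hDV : D * V - V * D = 0)
    (n : ℕ) (hn : 2 < n) (v : F) (hv : D v = 0) :
    (∑ k ∈ Finset.range (n + 1), n.choose k • ((D - U) ^ k * U ^ (n - k))) v =
      (n - 1) • (V ((∑ k ∈ Finset.range (n - 2 + 1),
        (n - 2).choose k • ((D - U) ^ k * U ^ (n - 2 - k))) v)) := by
  set X := D - U with hX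
  have hXY : X * U = U * X + V := by
    rw [← hDU, hX]
    noncomm_ring
  have hVY : V * U = U * V := by
    have := sub_eq_zero.mp hUV
    exact this.symm
  have hVX : V * X = X * V := by
    have h1 : V * D = D * V := (sub_eq_zero.mp hDV).symm
    rw [hX, mul_sub, sub_mul, h1, hVY]
  obtain ⟨m, rfl⟩ : ∃ m, n = m + 2 := ⟨n - 2, by omega⟩
  have key := binS_rec hXY hVY hVX m
  have hD : X + U = D := by rw [hX]; abel
  rw [hD] at key
  have goal1 : (∑ k ∈ Finset.range (m + 2 + 1), (m + 2).choose k • (X ^ k * U ^ (m + 2 - k))) v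
      = (binS X U (m + 2) : Module.End K F) v := rfl
  rw [goal1, key]
  have e1 : m + 2 - 1 = m + 1 := rfl
  have e2 : m + 2 - 2 = m := rfl
  rw [e1, e2]
  have : (binS X U (m + 1) * D + (m + 1) • (V * binS X U m)) v
      = binS X U (m + 1) (D v) + (m + 1) • (V ((binS X U m) v)) := by
    simp only [LinearMap.add_apply, Module.End.mul_apply, LinearMap.smul_apply]
  rw [this, hv, map_zero, zero_add]
  rfl
end
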